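/- arXiv:2408.13323 — 4 statements merged into one kernel-verified Lean document; each statement's English description precedes it below -/
import Mathlib

section
/- Under the Basic Assumption, suppose θ^ν·|τ^ν − τ| → 0, σ^ν, θ^ν → ∞, ε^ν → 0, there exists an optimal solution (x*, y*) of (P) such that the value function V is calm at x*, and for each ν, (x^ν, y^ν, u^ν, α^ν, λ^ν) is an ε^ν-optimal solution of (P)^ν. If along a subsequence N ⊂ ℕ one has (x^ν, y^ν, u^ν, α^ν, λ^ν) → (x̂, ŷ, û, α̂, λ̂) as ν → ∞ in N, then (x̂, ŷ) is an optimal solution of (P) and 𝔪^ν → 𝔪 along N, with 𝔪 a real number. -/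
open Filter Topology Metric Set

attribute [local instance] Classical.propDecidable

noncomputable section

/-- `ℝ^n` with the Euclidean norm. -/
abbrev Rn (n : ℕ) : Type := EuclideanSpace ℝ (Fin n)

variable {n m : ℕ} {Q : Type*} [NormedAddCommGroup Q]

/-- `(x, y)` is feasible in the bilevel problem (P): `x ∈ X` and
`y ∈ τ-argmin_{z ∈ Y} { g(x,z) | H(x,z) ∈ D }`. -/
def PFeas (X : Set (Rn n)) (Y : Set (Rn m)) (D : Set Q)
    (g : Rn n × Rn m → ℝ) (H : Rn n × Rn m → Q) (τ : ℝ)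
    (x : Rn n) (y : Rn m) : Prop :=
  x ∈ X ∧ y ∈ Y ∧ H (x, y) ∈ D ∧
    ∀ z ∈ Y, H (x, z) ∈ D → g (x, y) ≤ g (x, z) + τ

/-- The minimum value `𝔪` of (P). -/
def PVal (X : Set (Rn n)) (Y : Set (Rn m)) (D : Set Q)
    (f : Rn n × Rn m → EReal) (g : Rn n × Rn m → ℝ) (H : Rn n × Rn m → Q)
    (τ : ℝ) : EReal :=
  ⨅ (x : Rn n) (y : Rn m) (_ : PFeas X Y D g H τ x y), f (x, y)

/-- Optimal solution of (P): feasible, finite objective value attaining `𝔪`. -/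
def POpt (X : Set (Rn n)) (Y : Set (Rn m)) (D : Set Q)
    (f : Rn n × Rn m → EReal) (g : Rn n × Rn m → ℝ) (H : Rn n × Rn m → Q)
    (τ : ℝ) (x : Rn n) (y : Rn m) : Prop :=
  PFeas X Y D g H τ x y ∧ f (x, y) ≠ ⊤ ∧ f (x, y) = PVal X Y D f g H τ

/-- Feasibility in the alternative problem (P)^ν with data `Yn, gn, Hn, lamBar, τn`. -/
def PnuFeas (X : Set (Rn n)) (Y : Set (Rn m)) (D : Set Q) (Yn : Set (Rn m))
    (gn : Rn n × Rn m → ℝ) (Hn : Rn n × Rn m → Q) (lamBar τn : ℝ)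
    (x : Rn n) (y : Rn m) (u : Q) (α lam : ℝ) : Prop :=
  x ∈ X ∧ y ∈ Y ∧ α ≤ 0 ∧ 0 ≤ lam ∧ lam ≤ lamBar ∧ Hn (x, y) + u ∈ D ∧
    ∀ z ∈ Yn, gn (x, y) + α ≤ gn (x, z) + lam * infDist (Hn (x, z)) D + τn

/-- Objective function of (P)^ν: `f^ν(x,y) + σ^ν ‖u‖ - θ^ν α`. -/
def PnuObj (fn : Rn n × Rn m → EReal) (σn θn : ℝ)
    (x : Rn n) (y : Rn m) (u : Q) (α : ℝ) : EReal :=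
  fn (x, y) + ((σn * ‖u‖ - θn * α : ℝ) : EReal)

/-- The minimum value `𝔪^ν` of (P)^ν. -/
def PnuVal (X : Set (Rn n)) (Y : Set (Rn m)) (D : Set Q) (Yn : Set (Rn m))
    (fn : Rn n × Rn m → EReal) (gn : Rn n × Rn m → ℝ) (Hn : Rn n × Rn m → Q)
    (σn θn lamBar τn : ℝ) : EReal :=
  ⨅ (x : Rn n) (y : Rn m) (u : Q) (α : ℝ) (lam : ℝ)
    (_ : PnuFeas X Y D Yn gn Hn lamBar τn x y u α lam),
    PnuObj fn σn θn x y u α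

/-- `ε`-optimal solution of (P)^ν: feasible with finite objective value at most `𝔪^ν + ε`. -/
def PnuEps (X : Set (Rn n)) (Y : Set (Rn m)) (D : Set Q) (Yn : Set (Rn m))
    (fn : Rn n × Rn m → EReal) (gn : Rn n × Rn m → ℝ) (Hn : Rn n × Rn m → Q)
    (σn θn lamBar τn ε : ℝ)
    (x : Rn n) (y : Rn m) (u : Q) (α lam : ℝ) : Prop :=
  PnuFeas X Y D Yn gn Hn lamBar τn x y u α lam ∧
    PnuObj fn σn θn x y u α ≠ ⊤ ∧
    PnuObj fn σn θn x y u α ≤ PnuVal X Y D Yn fn gn Hn σn θn lamBar τn + (ε : EReal)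

/-- The value function `V(x,u) = inf_{y ∈ Y} { g(x,y) | H(x,y) + u ∈ D }`. -/
def Vfun (Y : Set (Rn m)) (D : Set Q)
    (g : Rn n × Rn m → ℝ) (H : Rn n × Rn m → Q)
    (x : Rn n) (u : Q) : EReal :=
  ⨅ (y : Rn m) (_ : y ∈ Y ∧ H (x, y) + u ∈ D), (g (x, y) : EReal)

/-- The value function `V` is calm at `x` with penalty threshold `lam`. -/
def CalmAtWith (Y : Set (Rn m)) (D : Set Q)
    (g : Rn n × Rn m → ℝ) (H : Rn n × Rn m → Q)
    (x : Rn n) (lam : ℝ) : Prop :=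
  0 ≤ lam ∧ ∀ u : Q,
    Vfun Y D g H x 0 - ((lam * ‖u‖ : ℝ) : EReal) ≤ Vfun Y D g H x u

/-- The value function `V` is calm at `x`. -/
def CalmAt (Y : Set (Rn m)) (D : Set Q)
    (g : Rn n × Rn m → ℝ) (H : Rn n × Rn m → Q) (x : Rn n) : Prop :=
  ∃ lam : ℝ, CalmAtWith Y D g H x lam

/-- The value function `V` is locally calm at `xbar`. -/
def LocallyCalmAt (Y : Set (Rn m)) (D : Set Q)
    (g : Rn n × Rn m → ℝ) (H : Rn n × Rn m → Q) (xbar : Rn n) : Prop :=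
  ∃ lam ρ : ℝ, 0 ≤ lam ∧ 0 < ρ ∧
    ∀ x ∈ Metric.closedBall xbar ρ, ∀ u : Q,
      Vfun Y D g H x 0 - ((lam * ‖u‖ : ℝ) : EReal) ≤ Vfun Y D g H x u

/-- The penalty-based value function `μ(x,λ) = inf_{y ∈ S} [g(x,y) + λ dist(H(x,y), D)]`. -/
def muSet (S : Set (Rn m)) (D : Set Q)
    (g : Rn n × Rn m → ℝ) (H : Rn n × Rn m → Q)
    (x : Rn n) (lam : ℝ) : EReal :=
  ⨅ (y : Rn m) (_ : y ∈ S), ((g (x, y) + lam * infDist (H (x, y)) D : ℝ) : EReal)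

/-- The Basic Assumption (Assumption 2.1). -/
structure BasicAssumption (X : Set (Rn n)) (Y : Set (Rn m)) (D : Set Q)
    (Yν : ℕ → Set (Rn m))
    (f : Rn n × Rn m → EReal) (fν : ℕ → Rn n × Rn m → EReal)
    (g : Rn n × Rn m → ℝ) (gν : ℕ → Rn n × Rn m → ℝ)
    (H : Rn n × Rn m → Q) (Hν : ℕ → Rn n × Rn m → Q)
    (σ θ lamBar τν δ η : ℕ → ℝ) : Prop where
  X_nonempty : X.Nonempty
  X_closed : IsClosed X
  Y_nonempty : Y.Nonempty
  Y_closed : IsClosed Y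
  D_nonempty : D.Nonempty
  D_closed : IsClosed D
  Yν_nonempty : ∀ ν, (Yν ν).Nonempty
  Yν_subset : ∀ ν, Yν ν ⊆ Y
  Yν_conv : ∀ y : Rn m,
    Tendsto (fun ν => infDist y (Yν ν)) atTop (𝓝 (infDist y Y))
  δ_lim : Tendsto δ atTop (𝓝 0)
  g_err : ∀ ν, ∀ x ∈ X, ∀ y ∈ Y, |gν ν (x, y) - g (x, y)| ≤ δ ν
  g_cont : ContinuousOn g (X ×ˢ Y)
  η_lim : Tendsto η atTop (𝓝 0)
  H_err : ∀ ν, ∀ x ∈ X, ∀ y ∈ Y,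
    |infDist (Hν ν (x, y)) D - infDist (H (x, y)) D| ≤ η ν
  H_cont : ContinuousOn H (X ×ˢ Y)
  f_ne_bot : ∀ p, f p ≠ ⊥
  fν_ne_bot : ∀ ν p, fν ν p ≠ ⊥
  f_limsup : ∀ x ∈ X, ∀ y ∈ Y,
    limsup (fun ν => fν ν (x, y)) atTop ≤ f (x, y)
  f_liminf : ∀ x ∈ X, ∀ y ∈ Y, ∀ (xs : ℕ → Rn n) (ys : ℕ → Rn m),
    (∀ ν, xs ν ∈ X) → (∀ ν, ys ν ∈ Y) →
    Tendsto xs atTop (𝓝 x) → Tendsto ys atTop (𝓝 y) →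
    f (x, y) ≤ liminf (fun ν => fν ν (xs ν, ys ν)) atTop
  σ_nonneg : ∀ ν, 0 ≤ σ ν
  θ_nonneg : ∀ ν, 0 ≤ θ ν
  lamBar_nonneg : ∀ ν, 0 ≤ lamBar ν
  τν_nonneg : ∀ ν, 0 ≤ τν ν
  lamBar_top : Tendsto lamBar atTop atTop
  ση_lim : Tendsto (fun ν => σ ν * η ν) atTop (𝓝 0)
  θlamη_lim : Tendsto (fun ν => θ ν * lamBar ν * η ν) atTop (𝓝 0)
  θδ_lim : Tendsto (fun ν => θ ν * δ ν) atTop (𝓝 0)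

-- ===== auxiliary lemmas =====

theorem tendsto_coe_of_eps (s : ℕ → EReal) (r : ℝ)
    (h : ∀ ε : ℝ, 0 < ε → ∀ᶠ k in atTop,
      ((r - ε : ℝ) : EReal) ≤ s k ∧ s k ≤ ((r + ε : ℝ) : EReal)) :
    Tendsto s atTop (𝓝 ((r : ℝ) : EReal)) := by
  refine tendsto_order.2 ⟨?_, ?_⟩
  · intro a ha
    obtain ⟨c, hac, hcr⟩ := EReal.exists_between_coe_real ha
    have hcr' : c < r := by exact_mod_cast hcr
    filter_upwards [h (r - c) (by linarith)] with k hk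
    have : ((c : ℝ) : EReal) ≤ s k := by
      have := hk.1
      rwa [show r - (r - c) = c by ring] at this
    exact lt_of_lt_of_le hac this
  · intro a ha
    obtain ⟨c, hrc, hca⟩ := EReal.exists_between_coe_real ha
    have hrc' : r < c := by exact_mod_cast hrc
    filter_upwards [h (c - r) (by linarith)] with k hk
    have : s k ≤ ((c : ℝ) : EReal) := by
      have := hk.2
      rwa [show r + (c - r) = c by ring] at this
    exact lt_of_le_of_lt this hca

theorem PVal_le_of_feas {X : Set (Rn n)} {Y : Set (Rn m)} {D : Set Q}
    {f : Rn n × Rn m → EReal} {g : Rn n × Rn m → ℝ} {H : Rn n × Rn m → Q}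
    {τ : ℝ} {x : Rn n} {y : Rn m} (h : PFeas X Y D g H τ x y) :
    PVal X Y D f g H τ ≤ f (x, y) :=
  iInf_le_of_le x (iInf_le_of_le y (iInf_le _ h))

theorem PnuVal_le_of_feas {X : Set (Rn n)} {Y : Set (Rn m)} {D : Set Q} {Yn : Set (Rn m)}
    {fn : Rn n × Rn m → EReal} {gn : Rn n × Rn m → ℝ} {Hn : Rn n × Rn m → Q}
    {σn θn lamBar τn : ℝ} {x : Rn n} {y : Rn m} {u : Q} {α lam : ℝ}
    (h : PnuFeas X Y D Yn gn Hn lamBar τn x y u α lam) :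
    PnuVal X Y D Yn fn gn Hn σn θn lamBar τn ≤ PnuObj fn σn θn x y u α :=
  iInf_le_of_le x (iInf_le_of_le y (iInf_le_of_le u (iInf_le_of_le α
    (iInf_le_of_le lam (iInf_le _ h)))))

set_option linter.unusedSectionVars false

theorem calm_lower [NormedSpace ℝ Q] [FiniteDimensional ℝ Q]
    {Y : Set (Rn m)} {D : Set Q} (hD : IsClosed D) (hDne : D.Nonempty)
    {g : Rn n × Rn m → ℝ} {H : Rn n × Rn m → Q} {x : Rn n} {lam : ℝ}
    (hcalm : CalmAtWith Y D g H x lam) {ystar : Rn m} {τ : ℝ}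
    (hy : ystar ∈ Y) (hH : H (x, ystar) ∈ D)
    (hargmin : ∀ z ∈ Y, H (x, z) ∈ D → g (x, ystar) ≤ g (x, z) + τ) :
    ∀ z ∈ Y, g (x, ystar) - τ ≤ g (x, z) + lam * infDist (H (x, z)) D := by
  intro z hz
  obtain ⟨w, hwD, hw⟩ := hD.exists_infDist_eq_dist hDne (H (x, z))
  set u : Q := w - H (x, z) with hu
  have hnu : ‖u‖ = infDist (H (x, z)) D := by
    rw [hw, dist_eq_norm, hu, norm_sub_rev]
  have h1 : Vfun Y D g H x u ≤ ((g (x, z) : ℝ) : EReal) := by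
    refine iInf_le_of_le z (iInf_le_of_le ⟨hz, ?_⟩ le_rfl)
    simpa [hu] using hwD
  have h2 : Vfun Y D g H x 0 - ((lam * ‖u‖ : ℝ) : EReal) ≤ ((g (x, z) : ℝ) : EReal) :=
    le_trans (hcalm.2 u) h1
  have h3 : ((g (x, ystar) - τ : ℝ) : EReal) ≤ Vfun Y D g H x 0 := by
    refine le_iInf fun y => le_iInf fun hy' => ?_
    have := hargmin y hy'.1 (by simpa using hy'.2)
    exact_mod_cast by linarith
  have h4 : ((g (x, ystar) - τ : ℝ) : EReal) - ((lam * ‖u‖ : ℝ) : EReal)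
      ≤ ((g (x, z) : ℝ) : EReal) := by
    refine le_trans ?_ h2
    rw [sub_eq_add_neg, sub_eq_add_neg]
    exact add_le_add h3 le_rfl
  rw [← EReal.coe_sub, EReal.coe_le_coe_iff] at h4
  have hd0 : 0 ≤ infDist (H (x, z)) D := infDist_nonneg
  rw [hnu] at h4
  linarith
/-- Theorem 2.5(c): under calmness, cluster points of vanishing-tolerance near-optimal
solutions of (P)^ν are optimal in (P), and `𝔪^ν → 𝔪 ∈ ℝ` along the subsequence. -/
theorem Pnu_cluster_optimal_of_calm
    [NormedSpace ℝ Q] [FiniteDimensional ℝ Q]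
    (X : Set (Rn n)) (Y : Set (Rn m)) (D : Set Q) (Yν : ℕ → Set (Rn m))
    (f : Rn n × Rn m → EReal) (fν : ℕ → Rn n × Rn m → EReal)
    (g : Rn n × Rn m → ℝ) (gν : ℕ → Rn n × Rn m → ℝ)
    (H : Rn n × Rn m → Q) (Hν : ℕ → Rn n × Rn m → Q)
    (σ θ lamBar τν δ η : ℕ → ℝ) (τ : ℝ) (hτ : 0 ≤ τ)
    (ba : BasicAssumption X Y D Yν f fν g gν H Hν σ θ lamBar τν δ η)
    (hrate : Tendsto (fun ν => θ ν * |τν ν - τ|) atTop (𝓝 0))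
    (hσ : Tendsto σ atTop atTop) (hθ : Tendsto θ atTop atTop)
    (xstar : Rn n) (ystar : Rn m)
    (hopt : POpt X Y D f g H τ xstar ystar)
    (hcalm : CalmAt Y D g H xstar)
    (ε : ℕ → ℝ) (hε0 : ∀ ν, 0 ≤ ε ν) (hεlim : Tendsto ε atTop (𝓝 0))
    (xs : ℕ → Rn n) (ys : ℕ → Rn m) (us : ℕ → Q) (αs lams : ℕ → ℝ)
    (hsol : ∀ ν, PnuEps X Y D (Yν ν) (fν ν) (gν ν) (Hν ν)
      (σ ν) (θ ν) (lamBar ν) (τν ν) (ε ν) (xs ν) (ys ν) (us ν) (αs ν) (lams ν))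
    (φ : ℕ → ℕ) (hφ : StrictMono φ)
    (hatx : Rn n) (haty : Rn m) (hatu : Q) (hatα hatlam : ℝ)
    (hcx : Tendsto (fun k => xs (φ k)) atTop (𝓝 hatx))
    (hcy : Tendsto (fun k => ys (φ k)) atTop (𝓝 haty))
    (hcu : Tendsto (fun k => us (φ k)) atTop (𝓝 hatu))
    (hcα : Tendsto (fun k => αs (φ k)) atTop (𝓝 hatα))
    (hclam : Tendsto (fun k => lams (φ k)) atTop (𝓝 hatlam)) :
    POpt X Y D f g H τ hatx haty ∧
    ∃ r : ℝ, PVal X Y D f g H τ = (r : EReal) ∧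
      Tendsto (fun k =>
        PnuVal X Y D (Yν (φ k)) (fν (φ k)) (gν (φ k)) (Hν (φ k))
          (σ (φ k)) (θ (φ k)) (lamBar (φ k)) (τν (φ k))) atTop
        (𝓝 ((r : EReal))) := by
  -- ===== basic setup =====
  obtain ⟨⟨hxsX, hysY, hHs, hargmin⟩, hfnetop, hfeq⟩ := hopt
  obtain ⟨lamc, hlamc⟩ := hcalm
  have hlamc0 : 0 ≤ lamc := hlamc.1
  obtain ⟨x0, hx0⟩ := ba.X_nonempty
  obtain ⟨y0, hy0⟩ := ba.Y_nonempty
  have hδ0 : ∀ ν, 0 ≤ δ ν := fun ν => le_trans (abs_nonneg _) (ba.g_err ν x0 hx0 y0 hy0)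
  have hη0 : ∀ ν, 0 ≤ η ν := fun ν => le_trans (abs_nonneg _) (ba.H_err ν x0 hx0 y0 hy0)
  set r : ℝ := (f (xstar, ystar)).toReal with hr_def
  have hr : f (xstar, ystar) = ((r : ℝ) : EReal) :=
    (EReal.coe_toReal hfnetop (ba.f_ne_bot _)).symm
  -- Step A : calmness consequence
  have hA : ∀ z ∈ Y, g (xstar, ystar) - τ ≤ g (xstar, z) + lamc * infDist (H (xstar, z)) D :=
    calm_lower ba.D_closed ba.D_nonempty hlamc hysY hHs hargmin
  -- Step B : upper bound on PnuVal
  set e : ℕ → ℝ := fun ν =>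
    σ ν * η ν + θ ν * (2 * δ ν) + θ ν * lamc * η ν + θ ν * |τν ν - τ| with he_def
  have hthlc : Tendsto (fun ν => θ ν * lamc * η ν) atTop (𝓝 0) := by
    apply squeeze_zero' (g := fun ν => θ ν * lamBar ν * η ν)
    · exact Eventually.of_forall fun ν =>
        mul_nonneg (mul_nonneg (ba.θ_nonneg ν) hlamc0) (hη0 ν)
    · filter_upwards [ba.lamBar_top.eventually_ge_atTop lamc] with ν hν
      exact mul_le_mul_of_nonneg_right
        (mul_le_mul_of_nonneg_left hν (ba.θ_nonneg ν)) (hη0 ν)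
    · exact ba.θlamη_lim
  have he0 : Tendsto e atTop (𝓝 0) := by
    have h2 : Tendsto (fun ν => θ ν * (2 * δ ν)) atTop (𝓝 0) := by
      have := ba.θδ_lim.const_mul (2 : ℝ)
      simpa [mul_comm, mul_assoc, mul_left_comm] using this
    simpa using ((ba.ση_lim.add h2).add hthlc).add hrate
  have hBub : ∀ᶠ ν in atTop,
      PnuVal X Y D (Yν ν) (fν ν) (gν ν) (Hν ν) (σ ν) (θ ν) (lamBar ν) (τν ν)
        ≤ fν ν (xstar, ystar) + ((e ν : ℝ) : EReal) := by
    filter_upwards [ba.lamBar_top.eventually_ge_atTop lamc] with ν hlb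
    obtain ⟨w, hwD, hw⟩ := ba.D_closed.exists_infDist_eq_dist ba.D_nonempty
      (Hν ν (xstar, ystar))
    set u : Q := w - Hν ν (xstar, ystar) with hu
    have hnu : ‖u‖ = infDist (Hν ν (xstar, ystar)) D := by
      rw [hw, dist_eq_norm, hu, norm_sub_rev]
    have hdistη : infDist (Hν ν (xstar, ystar)) D ≤ η ν := by
      have h1 := (abs_le.1 (ba.H_err ν xstar hxsX ystar hysY)).2
      have h2 : infDist (H (xstar, ystar)) D = 0 := infDist_zero_of_mem hHs
      linarith
    set α : ℝ := min (τν ν - τ) 0 - 2 * δ ν - lamc * η ν with hα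
    have hfeas : PnuFeas X Y D (Yν ν) (gν ν) (Hν ν) (lamBar ν) (τν ν) xstar ystar u α lamc := by
      refine ⟨hxsX, hysY, ?_, hlamc0, hlb, by simpa [hu] using hwD, ?_⟩
      · have := min_le_right (τν ν - τ) 0
        nlinarith [mul_nonneg hlamc0 (hη0 ν), hδ0 ν]
      · intro z hzYν
        have hzY : z ∈ Y := ba.Yν_subset ν hzYν
        have h1 := abs_le.1 (ba.g_err ν xstar hxsX ystar hysY)
        have h2 := abs_le.1 (ba.g_err ν xstar hxsX z hzY)
        have h3 := abs_le.1 (ba.H_err ν xstar hxsX z hzY)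
        have h4 := hA z hzY
        have hprod : lamc * (infDist (H (xstar, z)) D - η ν)
            ≤ lamc * infDist (Hν ν (xstar, z)) D :=
          mul_le_mul_of_nonneg_left (by linarith [h3.1]) hlamc0
        rw [mul_sub] at hprod
        have hmin : min (τν ν - τ) 0 ≤ τν ν - τ := min_le_left _ _
        rw [hα]
        linarith [h1.1, h1.2, h2.1, h2.2]
    have hobj : σ ν * ‖u‖ - θ ν * α ≤ e ν := by
      have h6 : σ ν * ‖u‖ ≤ σ ν * η ν :=
        mul_le_mul_of_nonneg_left (by rw [hnu]; exact hdistη) (ba.σ_nonneg ν)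
      have h7 : -|τν ν - τ| ≤ min (τν ν - τ) 0 :=
        le_min (neg_abs_le _) (neg_nonpos.2 (abs_nonneg _))
      have h8 : θ ν * (-α) ≤ θ ν * (2 * δ ν + lamc * η ν + |τν ν - τ|) :=
        mul_le_mul_of_nonneg_left (by rw [hα]; linarith) (ba.θ_nonneg ν)
      have h9 : θ ν * (2 * δ ν + lamc * η ν + |τν ν - τ|)
          = θ ν * (2 * δ ν) + θ ν * lamc * η ν + θ ν * |τν ν - τ| := by ring
      have h10 : θ ν * (-α) = -(θ ν * α) := by ring
      rw [he_def]
      dsimp only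
      linarith
    calc PnuVal X Y D (Yν ν) (fν ν) (gν ν) (Hν ν) (σ ν) (θ ν) (lamBar ν) (τν ν)
        ≤ PnuObj (fν ν) (σ ν) (θ ν) xstar ystar u α := PnuVal_le_of_feas hfeas
      _ ≤ fν ν (xstar, ystar) + ((e ν : ℝ) : EReal) := by
          exact add_le_add le_rfl (by exact_mod_cast hobj)
  -- Step C : for every ε > 0 eventually PnuVal ν ≤ r + ε
  have hupper : ∀ εp : ℝ, 0 < εp → ∀ᶠ ν in atTop,
      PnuVal X Y D (Yν ν) (fν ν) (gν ν) (Hν ν) (σ ν) (θ ν) (lamBar ν) (τν ν)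
        ≤ ((r + εp : ℝ) : EReal) := by
    intro εp hεp
    have hlim : limsup (fun ν => fν ν (xstar, ystar)) atTop < ((r + εp / 2 : ℝ) : EReal) := by
      refine lt_of_le_of_lt (ba.f_limsup xstar hxsX ystar hysY) ?_
      rw [hr]
      exact_mod_cast (by linarith : r < r + εp / 2)
    have hev1 := eventually_lt_of_limsup_lt hlim
    have hev2 : ∀ᶠ ν in atTop, e ν ≤ εp / 2 :=
      (he0.eventually (gt_mem_nhds (by linarith : (0:ℝ) < εp / 2))).mono fun ν h => le_of_lt h
    filter_upwards [hBub, hev1, hev2] with ν h1 h2 h3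
    refine le_trans h1 (le_trans (add_le_add h2.le (EReal.coe_le_coe_iff.2 h3)) ?_)
    rw [← EReal.coe_add]
    exact_mod_cast le_of_eq (by ring)
  -- ===== subsequence setup =====
  have hφtop : Tendsto φ atTop atTop := hφ.tendsto_atTop
  have hxX : ∀ ν, xs ν ∈ X := fun ν => (hsol ν).1.1
  have hyY : ∀ ν, ys ν ∈ Y := fun ν => (hsol ν).1.2.1
  have hα0 : ∀ ν, αs ν ≤ 0 := fun ν => (hsol ν).1.2.2.1
  have hlam0 : ∀ ν, 0 ≤ lams ν := fun ν => (hsol ν).1.2.2.2.1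
  have hHuD : ∀ ν, Hν ν (xs ν, ys ν) + us ν ∈ D := fun ν => (hsol ν).1.2.2.2.2.2.1
  have hconstr : ∀ ν, ∀ z ∈ Yν ν, gν ν (xs ν, ys ν) + αs ν ≤
      gν ν (xs ν, z) + lams ν * infDist (Hν ν (xs ν, z)) D + τν ν :=
    fun ν => (hsol ν).1.2.2.2.2.2.2
  have hhatxX : hatx ∈ X :=
    ba.X_closed.mem_of_tendsto hcx (Eventually.of_forall fun k => hxX (φ k))
  have hhatyY : haty ∈ Y :=
    ba.Y_closed.mem_of_tendsto hcy (Eventually.of_forall fun k => hyY (φ k))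
  -- extend the subsequence to full sequences to use f_liminf
  set xt : ℕ → Rn n := fun ν => if ν ∈ Set.range φ then xs ν else hatx with hxt_def
  set yt : ℕ → Rn m := fun ν => if ν ∈ Set.range φ then ys ν else haty with hyt_def
  have hxtφ : ∀ k, xt (φ k) = xs (φ k) := fun k => if_pos ⟨k, rfl⟩
  have hytφ : ∀ k, yt (φ k) = ys (φ k) := fun k => if_pos ⟨k, rfl⟩
  have hxtX : ∀ ν, xt ν ∈ X := fun ν => by
    by_cases h : ν ∈ Set.range φ <;> simp only [hxt_def, h, if_pos, if_neg, if_true, if_false]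
    exacts [hxX ν, hhatxX]
  have hytY : ∀ ν, yt ν ∈ Y := fun ν => by
    by_cases h : ν ∈ Set.range φ <;> simp only [hyt_def, h, if_pos, if_neg, if_true, if_false]
    exacts [hyY ν, hhatyY]
  have hxtlim : Tendsto xt atTop (𝓝 hatx) := by
    refine Metric.tendsto_atTop.2 fun εp hεp => ?_
    obtain ⟨K, hK⟩ := Metric.tendsto_atTop.1 hcx εp hεp
    refine ⟨φ K, fun ν hν => ?_⟩
    by_cases h : ν ∈ Set.range φ
    · obtain ⟨k, rfl⟩ := h
      rw [hxtφ k]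
      exact hK k ((hφ.le_iff_le).1 hν)
    · simp only [hxt_def, if_neg h]
      simpa using hεp
  have hytlim : Tendsto yt atTop (𝓝 haty) := by
    refine Metric.tendsto_atTop.2 fun εp hεp => ?_
    obtain ⟨K, hK⟩ := Metric.tendsto_atTop.1 hcy εp hεp
    refine ⟨φ K, fun ν hν => ?_⟩
    by_cases h : ν ∈ Set.range φ
    · obtain ⟨k, rfl⟩ := h
      rw [hytφ k]
      exact hK k ((hφ.le_iff_le).1 hν)
    · simp only [hyt_def, if_neg h]
      simpa using hεp
  have hflb0 : f (hatx, haty) ≤ liminf (fun ν => fν ν (xt ν, yt ν)) atTop :=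
    ba.f_liminf hatx hhatxX haty hhatyY xt yt hxtX hytY hxtlim hytlim
  have hflb : f (hatx, haty) ≤ liminf (fun k => fν (φ k) (xs (φ k), ys (φ k))) atTop := by
    refine le_trans hflb0 ?_
    have h1 : liminf (fun ν => fν ν (xt ν, yt ν)) atTop
        ≤ liminf ((fun ν => fν ν (xt ν, yt ν)) ∘ φ) atTop :=
      liminf_le_liminf_of_le hφtop
    refine le_trans h1 (le_of_eq (liminf_congr (Eventually.of_forall fun k => ?_)))
    simp only [Function.comp_apply, hxtφ k, hytφ k]
  -- abbreviation for the penalty part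
  set p : ℕ → ℝ := fun ν => σ ν * ‖us ν‖ - θ ν * αs ν with hp_def
  have hp0 : ∀ ν, 0 ≤ p ν := fun ν => by
    have h1 : 0 ≤ σ ν * ‖us ν‖ := mul_nonneg (ba.σ_nonneg ν) (norm_nonneg _)
    have h2 : θ ν * αs ν ≤ 0 := mul_nonpos_of_nonneg_of_nonpos (ba.θ_nonneg ν) (hα0 ν)
    show 0 ≤ σ ν * ‖us ν‖ - θ ν * αs ν
    linarith
  have hObjEq : ∀ ν, PnuObj (fν ν) (σ ν) (θ ν) (xs ν) (ys ν) (us ν) (αs ν)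
      = fν ν (xs ν, ys ν) + ((p ν : ℝ) : EReal) := fun ν => rfl
  have hfle : ∀ ν, fν ν (xs ν, ys ν) ≤ PnuObj (fν ν) (σ ν) (θ ν) (xs ν) (ys ν) (us ν) (αs ν) := by
    intro ν
    rw [hObjEq ν]
    refine le_add_of_nonneg_right ?_
    exact_mod_cast hp0 ν
  -- eventual real upper bound on the objective
  have hObjUB : ∀ᶠ k in atTop,
      PnuObj (fν (φ k)) (σ (φ k)) (θ (φ k)) (xs (φ k)) (ys (φ k)) (us (φ k)) (αs (φ k))
        ≤ ((r + 2 : ℝ) : EReal) := by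
    filter_upwards [hφtop.eventually (hupper 1 one_pos),
      hφtop.eventually (hεlim.eventually (gt_mem_nhds (by norm_num : (0:ℝ) < 1)))] with k h1 h2
    refine le_trans (hsol (φ k)).2.2 (le_trans (add_le_add h1 (EReal.coe_le_coe_iff.2 h2.le)) ?_)
    rw [← EReal.coe_add]
    exact_mod_cast le_of_eq (by ring)
  -- lower real bound c on the fν values along the subsequence
  obtain ⟨c, hc1, hc2⟩ := EReal.exists_between_coe_real
    (bot_lt_iff_ne_bot.2 (ba.f_ne_bot (hatx, haty)))
  have hcev : ∀ᶠ k in atTop, ((c : ℝ) : EReal) < fν (φ k) (xs (φ k), ys (φ k)) :=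
    eventually_lt_of_lt_liminf (lt_of_lt_of_le hc2 hflb)
  set K : ℝ := r + 2 - c with hK_def
  have hpUB : ∀ᶠ k in atTop, p (φ k) ≤ K := by
    filter_upwards [hObjUB, hcev] with k h1 h2
    have h3 : ((c : ℝ) : EReal) + ((p (φ k) : ℝ) : EReal) ≤ ((r + 2 : ℝ) : EReal) := by
      refine le_trans (add_le_add h2.le le_rfl) ?_
      rw [← hObjEq (φ k)]
      exact h1
    rw [← EReal.coe_add, EReal.coe_le_coe_iff] at h3
    rw [hK_def]; linarith
  have hpdef : ∀ ν, p ν = σ ν * ‖us ν‖ - θ ν * αs ν := fun ν => rfl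
  have hσuUB : ∀ᶠ k in atTop, σ (φ k) * ‖us (φ k)‖ ≤ K := by
    filter_upwards [hpUB] with k h
    have h2 : θ (φ k) * αs (φ k) ≤ 0 :=
      mul_nonpos_of_nonneg_of_nonpos (ba.θ_nonneg _) (hα0 _)
    have h3 := hpdef (φ k)
    linarith
  have hθαUB : ∀ᶠ k in atTop, -(θ (φ k) * αs (φ k)) ≤ K := by
    filter_upwards [hpUB] with k h
    have h2 : 0 ≤ σ (φ k) * ‖us (φ k)‖ := mul_nonneg (ba.σ_nonneg _) (norm_nonneg _)
    have h3 := hpdef (φ k)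
    linarith
  have hKθ : Tendsto (fun k => K / θ (φ k)) atTop (𝓝 0) :=
    tendsto_const_nhds.div_atTop (hθ.comp hφtop)
  have hαtends : Tendsto (fun k => αs (φ k)) atTop (𝓝 0) := by
    refine tendsto_of_tendsto_of_tendsto_of_le_of_le' (by simpa using hKθ.neg)
      tendsto_const_nhds ?_ (Eventually.of_forall fun k => hα0 (φ k))
    filter_upwards [hθαUB, (hθ.comp hφtop).eventually_ge_atTop 1] with k h1 h2
    have h2' : (1:ℝ) ≤ θ (φ k) := h2
    have hθpos : (0:ℝ) < θ (φ k) := by linarith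
    rw [neg_le, le_div_iff₀ hθpos]
    linarith
  have hhatα : hatα = 0 := tendsto_nhds_unique hcα hαtends
  have hKσ : Tendsto (fun k => K / σ (φ k)) atTop (𝓝 0) :=
    tendsto_const_nhds.div_atTop (hσ.comp hφtop)
  have hulim : Tendsto (fun k => ‖us (φ k)‖) atTop (𝓝 0) := by
    refine tendsto_of_tendsto_of_tendsto_of_le_of_le' tendsto_const_nhds hKσ
      (Eventually.of_forall fun k => norm_nonneg _) ?_
    filter_upwards [hσuUB, (hσ.comp hφtop).eventually_ge_atTop 1] with k h1 h2
    have h2' : (1:ℝ) ≤ σ (φ k) := h2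
    have hσpos : (0:ℝ) < σ (φ k) := by linarith
    rw [le_div_iff₀ hσpos]
    linarith
  -- H (hatx, haty) ∈ D
  have hd1 : ∀ ν, infDist (Hν ν (xs ν, ys ν)) D ≤ ‖us ν‖ := by
    intro ν
    have h0 := infDist_le_dist_of_mem (s := D) (x := Hν ν (xs ν, ys ν)) (hHuD ν)
    rwa [dist_eq_norm, show Hν ν (xs ν, ys ν) - (Hν ν (xs ν, ys ν) + us ν) = -(us ν) by abel,
      norm_neg] at h0
  have hd2 : ∀ k, infDist (H (xs (φ k), ys (φ k))) D ≤ ‖us (φ k)‖ + η (φ k) := by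
    intro k
    have h1 := (abs_le.1 (ba.H_err (φ k) _ (hxX (φ k)) _ (hyY (φ k)))).1
    linarith [hd1 (φ k)]
  have hpairT : Tendsto (fun k => (xs (φ k), ys (φ k))) atTop (𝓝[X ×ˢ Y] (hatx, haty)) :=
    tendsto_nhdsWithin_iff.2 ⟨hcx.prodMk_nhds hcy,
      Eventually.of_forall fun k => mk_mem_prod (hxX _) (hyY _)⟩
  have hHtends : Tendsto (fun k => H (xs (φ k), ys (φ k))) atTop (𝓝 (H (hatx, haty))) :=
    (ba.H_cont (hatx, haty) (mk_mem_prod hhatxX hhatyY)).tendsto.comp hpairT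
  have hdistT : Tendsto (fun k => infDist (H (xs (φ k), ys (φ k))) D) atTop
      (𝓝 (infDist (H (hatx, haty)) D)) :=
    ((continuous_infDist_pt D).tendsto _).comp hHtends
  have hmemD : H (hatx, haty) ∈ D := by
    have hub : infDist (H (hatx, haty)) D ≤ 0 := by
      refine le_of_tendsto_of_tendsto' hdistT (by simpa using hulim.add (ba.η_lim.comp hφtop)) hd2
    exact (ba.D_closed.mem_iff_infDist_zero ba.D_nonempty).2
      (le_antisymm hub infDist_nonneg)
  -- τν → τ
  have hτνlim : Tendsto τν atTop (𝓝 τ) := by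
    have habs : Tendsto (fun ν => |τν ν - τ|) atTop (𝓝 0) := by
      apply squeeze_zero' (Eventually.of_forall fun ν => abs_nonneg _) _ hrate
      filter_upwards [hθ.eventually_ge_atTop 1] with ν h1
      exact le_mul_of_one_le_left (abs_nonneg _) h1
    have : Tendsto (fun ν => dist (τν ν) τ) atTop (𝓝 0) := by simpa [Real.dist_eq] using habs
    exact tendsto_iff_dist_tendsto_zero.2 this
  -- feasibility of (hatx, haty)
  have hfeas : PFeas X Y D g H τ hatx haty := by
    refine ⟨hhatxX, hhatyY, hmemD, fun z hzY hHz => ?_⟩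
    -- approximating sequence in Yν
    have hzj : ∀ ν : ℕ, ∃ w ∈ Yν ν, dist z w < infDist z (Yν ν) + 1/((ν:ℝ)+1) :=
      fun ν => (infDist_lt_iff (ba.Yν_nonempty ν)).1 (lt_add_of_pos_right _ (by positivity))
    choose zs hzs1 hzs2 using hzj
    have hzsY : ∀ ν, zs ν ∈ Y := fun ν => ba.Yν_subset ν (hzs1 ν)
    have hzlim : Tendsto zs atTop (𝓝 z) := by
      have hdistlim : Tendsto (fun ν => dist z (zs ν)) atTop (𝓝 0) := by
        refine tendsto_of_tendsto_of_tendsto_of_le_of_le' tendsto_const_nhds ?_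
          (Eventually.of_forall fun ν => dist_nonneg)
          (Eventually.of_forall fun ν => (hzs2 ν).le)
        have h1 := ba.Yν_conv z
        rw [infDist_zero_of_mem hzY] at h1
        simpa using h1.add tendsto_one_div_add_atTop_nhds_zero_nat
      refine tendsto_iff_dist_tendsto_zero.2 (by simpa [dist_comm] using hdistlim)
    -- continuity limits
    have hgyyT : Tendsto (fun k => g (xs (φ k), ys (φ k))) atTop (𝓝 (g (hatx, haty))) :=
      (ba.g_cont (hatx, haty) (mk_mem_prod hhatxX hhatyY)).tendsto.comp hpairT
    have hpairzT : Tendsto (fun k => (xs (φ k), zs (φ k))) atTop (𝓝[X ×ˢ Y] (hatx, z)) :=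
      tendsto_nhdsWithin_iff.2 ⟨hcx.prodMk_nhds (hzlim.comp hφtop),
        Eventually.of_forall fun k => mk_mem_prod (hxX _) (hzsY _)⟩
    have hgzT : Tendsto (fun k => g (xs (φ k), zs (φ k))) atTop (𝓝 (g (hatx, z))) :=
      (ba.g_cont (hatx, z) (mk_mem_prod hhatxX hzY)).tendsto.comp hpairzT
    have hdzT : Tendsto (fun k => infDist (H (xs (φ k), zs (φ k))) D) atTop (𝓝 0) := by
      have h1 : Tendsto (fun k => H (xs (φ k), zs (φ k))) atTop (𝓝 (H (hatx, z))) :=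
        (ba.H_cont (hatx, z) (mk_mem_prod hhatxX hzY)).tendsto.comp hpairzT
      have h2 := ((continuous_infDist_pt D).tendsto _).comp h1
      rwa [infDist_zero_of_mem hHz] at h2
    -- per-k inequality
    have hkey : ∀ k, g (xs (φ k), ys (φ k)) - δ (φ k) + αs (φ k)
        ≤ g (xs (φ k), zs (φ k)) + δ (φ k)
          + lams (φ k) * (infDist (H (xs (φ k), zs (φ k))) D + η (φ k)) + τν (φ k) := by
      intro k
      have h0 := hconstr (φ k) (zs (φ k)) (hzs1 (φ k))
      have h1 := (abs_le.1 (ba.g_err (φ k) _ (hxX (φ k)) _ (hyY (φ k)))).1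
      have h2 := (abs_le.1 (ba.g_err (φ k) _ (hxX (φ k)) _ (hzsY (φ k)))).2
      have h3 := (abs_le.1 (ba.H_err (φ k) _ (hxX (φ k)) _ (hzsY (φ k)))).2
      have h4 : lams (φ k) * infDist (Hν (φ k) (xs (φ k), zs (φ k))) D
          ≤ lams (φ k) * (infDist (H (xs (φ k), zs (φ k))) D + η (φ k)) :=
        mul_le_mul_of_nonneg_left (by linarith) (hlam0 (φ k))
      linarith
    -- take limits
    have hL : Tendsto (fun k => g (xs (φ k), ys (φ k)) - δ (φ k) + αs (φ k)) atTop
        (𝓝 (g (hatx, haty))) := by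
      have := (hgyyT.sub (ba.δ_lim.comp hφtop)).add hαtends
      simpa using this
    have hR : Tendsto (fun k => g (xs (φ k), zs (φ k)) + δ (φ k)
        + lams (φ k) * (infDist (H (xs (φ k), zs (φ k))) D + η (φ k)) + τν (φ k)) atTop
        (𝓝 (g (hatx, z) + τ)) := by
      have h5 : Tendsto (fun k => lams (φ k) * (infDist (H (xs (φ k), zs (φ k))) D + η (φ k)))
          atTop (𝓝 (hatlam * (0 + 0))) :=
        hclam.mul (hdzT.add (ba.η_lim.comp hφtop))
      have := ((hgzT.add (ba.δ_lim.comp hφtop)).add h5).add (hτνlim.comp hφtop)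
      simpa using this
    exact le_of_tendsto_of_tendsto' hL hR hkey
  -- ===== optimal value equalities =====
  have hPVal : PVal X Y D f g H τ = ((r : ℝ) : EReal) := by rw [← hfeq, hr]
  have hle1 : ((r : ℝ) : EReal) ≤ f (hatx, haty) := by
    rw [← hPVal]; exact PVal_le_of_feas hfeas
  have hfub : ∀ εp : ℝ, 0 < εp → f (hatx, haty) ≤ ((r + εp : ℝ) : EReal) := by
    intro εp hεp
    have hev : ∀ᶠ k in atTop, fν (φ k) (xs (φ k), ys (φ k)) ≤ ((r + εp : ℝ) : EReal) := by
      filter_upwards [hφtop.eventually (hupper (εp/2) (by linarith)),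
        hφtop.eventually (hεlim.eventually (gt_mem_nhds (by linarith : (0:ℝ) < εp/2)))]
        with k h1 h2
      refine le_trans (hfle (φ k)) (le_trans (hsol (φ k)).2.2 ?_)
      refine le_trans (add_le_add h1 (EReal.coe_le_coe_iff.2 h2.le)) ?_
      rw [← EReal.coe_add]
      exact EReal.coe_le_coe_iff.2 (by linarith)
    exact le_trans hflb (liminf_le_of_frequently_le' hev.frequently)
  have hge : f (hatx, haty) ≤ ((r : ℝ) : EReal) := by
    by_contra hcon
    rw [not_le] at hcon
    obtain ⟨c, h1, h2⟩ := EReal.exists_between_coe_real hcon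
    have hrc : r < c := by exact_mod_cast h1
    have := hfub (c - r) (by linarith)
    rw [show r + (c - r) = c by ring] at this
    exact absurd (lt_of_le_of_lt this h2) (lt_irrefl _)
  have hfeqhat : f (hatx, haty) = ((r : ℝ) : EReal) := le_antisymm hge hle1
  have hPOpt : POpt X Y D f g H τ hatx haty :=
    ⟨hfeas, by rw [hfeqhat]; exact EReal.coe_ne_top r, hfeqhat.trans hPVal.symm⟩
  -- ===== convergence of the values =====
  refine ⟨hPOpt, r, hPVal, tendsto_coe_of_eps _ r ?_⟩
  intro εp hεp
  have hub := hφtop.eventually (hupper εp hεp)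
  have hcf : (((r - εp/2 : ℝ)) : EReal) < f (hatx, haty) := by
    rw [hfeqhat]
    exact EReal.coe_lt_coe_iff.2 (by linarith)
  have hev2 := eventually_lt_of_lt_liminf (lt_of_lt_of_le hcf hflb)
  filter_upwards [hub, hev2,
    hφtop.eventually (hεlim.eventually (gt_mem_nhds (by linarith : (0:ℝ) < εp/2)))]
    with k h1 h2 h3
  refine ⟨?_, h1⟩
  have h4 : (((r - εp/2 : ℝ)) : EReal)
      ≤ PnuVal X Y D (Yν (φ k)) (fν (φ k)) (gν (φ k)) (Hν (φ k))
          (σ (φ k)) (θ (φ k)) (lamBar (φ k)) (τν (φ k)) + ((ε (φ k) : ℝ) : EReal) :=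
    le_trans (le_trans h2.le (hfle (φ k))) (hsol (φ k)).2.2
  have h5 := (EReal.sub_le_iff_le_add (Or.inl (EReal.coe_ne_bot _))
    (Or.inl (EReal.coe_ne_top _))).2 h4
  rw [← EReal.coe_sub] at h5
  exact le_trans (EReal.coe_le_coe_iff.2 (by linarith)) h5
end
end

section
/- Under the Basic Assumption, suppose σ^ν, θ^ν → ∞, ε^ν → 0, θ^ν·|τ^ν − τ| → 0, there exists an optimal solution (x*, y*) of (P) such that the value function V is calm at x*, and for each ν, (x^ν, y^ν, u^ν, α^ν, λ^ν) is an ε^ν-optimal solution of (P)^ν. Suppose along a subsequence N ⊂ ℕ one has (x^ν, y^ν, u^ν, α^ν) → (x̂, ŷ, û, α̂) and V is locally calm at x̂. If Y^ν = Y for all ν sufficiently large, then (x̂, ŷ) is an optimal solution of (P) and 𝔪^ν → 𝔪 along N, with 𝔪 a real number. -/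
open Filter Topology Metric Set

attribute [local instance] Classical.propDecidable

noncomputable section

variable {n m : ℕ} {Q : Type*} [NormedAddCommGroup Q]

/-!
Calmness of `V` at `x*` makes `λ·dist(H(x*, ·), D)` an exact penalty for the lower-level
problem, so `(x*, y*)`, with a residual `u` of size at most `η^ν` and a slack `α` of order
`δ^ν + λ̄^ν η^ν + |τ^ν - τ|`, is feasible in (P)^ν at a cost `f^ν(x*, y*) + o(1)`; hence
`limsup 𝔪^ν ≤ 𝔪`. The objective values of the ε^ν-optimal points therefore stay bounded while
`σ^ν, θ^ν → ∞`, which forces `u^ν, α^ν → 0`. So `H(x̂, ŷ) ∈ D`, and local calmness at `x̂`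
(with `Y^ν = Y`) passes the lower-level constraint of (P)^ν to the limit as `τ`-optimality of
`ŷ`. Finally `𝔪 ≤ f(x̂, ŷ) ≤ liminf f^ν(x^ν, y^ν) ≤ liminf 𝔪^ν ≤ limsup 𝔪^ν ≤ 𝔪`.
The Basic Assumption survives passing to a subsequence, so it suffices to treat the full
sequence.
-/

theorem tendsto_zero_of_eventually_mul_le {α : Type*} {l : Filter α} {c x : α → ℝ} {C : ℝ}
    (hc : Tendsto c l atTop) (hx : ∀ᶠ k in l, 0 ≤ x k) (hcx : ∀ᶠ k in l, c k * x k ≤ C) :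
    Tendsto x l (𝓝 0) := by
  refine tendsto_of_tendsto_of_tendsto_of_le_of_le' tendsto_const_nhds
    ((tendsto_const_nhds (x := C)).div_atTop hc) hx ?_
  filter_upwards [hcx, hc.eventually_gt_atTop 0] with k hck hpos
  rwa [le_div_iff₀ hpos, mul_comm]

theorem tendsto_zero_of_eventually_mul_add_mul_le {α : Type*} {l : Filter α} {c d x y : α → ℝ}
    {C : ℝ} (hc : Tendsto c l atTop) (hd : Tendsto d l atTop) (hx : ∀ᶠ k in l, 0 ≤ x k)
    (hy : ∀ᶠ k in l, 0 ≤ y k) (h : ∀ᶠ k in l, c k * x k + d k * y k ≤ C) :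
    Tendsto x l (𝓝 0) ∧ Tendsto y l (𝓝 0) := by
  have hc0 := hc.eventually_ge_atTop 0
  have hd0 := hd.eventually_ge_atTop 0
  refine ⟨tendsto_zero_of_eventually_mul_le (C := C) hc hx ?_,
    tendsto_zero_of_eventually_mul_le (C := C) hd hy ?_⟩
  all_goals
    filter_upwards [hx, hy, hc0, hd0, h] with k hxk hyk hck hdk hk
    nlinarith [mul_nonneg hck hxk, mul_nonneg hdk hyk]

theorem tendsto_extend_of_strictMono {E : Type*} [TopologicalSpace E] {φ : ℕ → ℕ}
    (hφ : StrictMono φ) {s : ℕ → E} {a : E} (hs : Tendsto s atTop (𝓝 a)) :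
    Tendsto (Function.extend φ s fun _ => a) atTop (𝓝 a) := by
  refine tendsto_def.2 fun U hU => ?_
  obtain ⟨K, hK⟩ := eventually_atTop.1 (hs.eventually_mem hU)
  refine eventually_atTop.2 ⟨φ K, fun ν hν => ?_⟩
  by_cases hrange : ∃ k, φ k = ν
  · obtain ⟨k, rfl⟩ := hrange
    rw [hφ.injective.extend_apply]
    exact hK k (hφ.le_iff_le.1 hν)
  · rw [Function.extend_apply' _ _ _ hrange]
    exact mem_of_mem_nhds hU

theorem Function.extend_mem {α β γ : Type*} {φ : α → β} {s : α → γ} {S : Set γ} {a : γ}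
    (hs : ∀ k, s k ∈ S) (ha : a ∈ S) (ν : β) : Function.extend φ s (fun _ => a) ν ∈ S := by
  unfold Function.extend
  split_ifs
  exacts [hs _, ha]

namespace EReal

variable {α : Type*} {l : Filter α} {a b : α → EReal} {e : α → ℝ}

theorem limsup_le_of_le_add_of_tendsto_zero [l.NeBot] (h : ∀ᶠ k in l, a k ≤ b k + e k)
    (he : Tendsto e l (𝓝 0)) : limsup a l ≤ limsup b l := by
  have he' : limsup (fun k => (e k : EReal)) l = 0 :=
    (tendsto_coe.2 he).limsup_eq
  calc limsup a l ≤ limsup (b + fun k => (e k : EReal)) l := limsup_le_limsup h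
    _ ≤ limsup b l + limsup (fun k => (e k : EReal)) l :=
      limsup_add_le (.inr (by simp [he'])) (.inr (by simp [he']))
    _ = limsup b l := by rw [he', add_zero]

theorem liminf_le_of_le_add_of_tendsto_zero [l.NeBot] (h : ∀ᶠ k in l, a k ≤ b k + e k)
    (he : Tendsto e l (𝓝 0)) : liminf a l ≤ liminf b l := by
  have he' : limsup (fun k => (e k : EReal)) l = 0 :=
    (tendsto_coe.2 he).limsup_eq
  calc liminf a l ≤ liminf ((fun k => (e k : EReal)) + b) l :=
        liminf_le_liminf (h.mono fun k hk => hk.trans_eq (add_comm _ _))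
    _ ≤ limsup (fun k => (e k : EReal)) l + liminf b l :=
      liminf_add_le (.inl (by simp [he'])) (.inl (by simp [he']))
    _ = liminf b l := by rw [he', zero_add]

theorem exists_eventually_le_of_add_le {s : α → ℝ} (h : ∀ᶠ k in l, b k + s k ≤ a k + e k)
    (hb : liminf b l ≠ ⊥) (ha : limsup a l ≠ ⊤) (he : Tendsto e l (𝓝 0)) :
    ∃ C : ℝ, ∀ᶠ k in l, s k ≤ C := by
  obtain ⟨b₀, -, hb₀⟩ := EReal.exists_between_coe_real (bot_lt_iff_ne_bot.2 hb)
  obtain ⟨a₀, ha₀, -⟩ := EReal.exists_between_coe_real (lt_top_iff_ne_top.2 ha)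
  refine ⟨a₀ + 1 - b₀, ?_⟩
  filter_upwards [h, eventually_lt_of_lt_liminf hb₀, eventually_lt_of_limsup_lt ha₀,
    he.eventually_le_const one_pos] with k hk hbk hak hek
  have hsum : ((b₀ + s k : ℝ) : EReal) ≤ ((a₀ + 1 : ℝ) : EReal) :=
    calc ((b₀ + s k : ℝ) : EReal) ≤ b k + s k := by rw [EReal.coe_add]; gcongr
      _ ≤ a k + e k := hk
      _ ≤ ((a₀ + 1 : ℝ) : EReal) := by rw [EReal.coe_add]; gcongr
  linarith [EReal.coe_le_coe_iff.1 hsum]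

end EReal

theorem ContinuousOn.tendsto_comp_prodMk {ι α β γ : Type*} [TopologicalSpace α]
    [TopologicalSpace β] [TopologicalSpace γ] {l : Filter ι} {F : α × β → γ} {s : Set α}
    {t : Set β} (hF : ContinuousOn F (s ×ˢ t)) {a : α} {b : β} (ha : a ∈ s) (hb : b ∈ t)
    {xs : ι → α} {ys : ι → β} (hxs : ∀ i, xs i ∈ s) (hys : ∀ i, ys i ∈ t)
    (hx : Tendsto xs l (𝓝 a)) (hy : Tendsto ys l (𝓝 b)) :
    Tendsto (fun i => F (xs i, ys i)) l (𝓝 (F (a, b))) :=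
  (hF _ ⟨ha, hb⟩).tendsto.comp <|
    tendsto_nhdsWithin_iff.2 ⟨hx.prodMk_nhds hy, .of_forall fun i => ⟨hxs i, hys i⟩⟩

section ValueFunction

variable {X : Set (Rn n)} {Y : Set (Rn m)} {D : Set Q} {g : Rn n × Rn m → ℝ}
  {H : Rn n × Rn m → Q} {τ lam : ℝ} {x : Rn n} {y z : Rn m}

theorem Vfun_le_of_mem {u : Q} (hz : z ∈ Y) (hzu : H (x, z) + u ∈ D) :
    Vfun Y D g H x u ≤ g (x, z) :=
  iInf₂_le z ⟨hz, hzu⟩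

theorem Vfun_lt_iff {u : Q} {c : EReal} :
    Vfun Y D g H x u < c ↔ ∃ w ∈ Y, H (x, w) + u ∈ D ∧ (g (x, w) : EReal) < c := by
  simp only [Vfun, iInf_lt_iff, exists_prop, and_assoc]

theorem Vfun_zero_le_add_mul_infDist [ProperSpace Q] (hD : IsClosed D) (hD' : D.Nonempty)
    (hcalm : ∀ u : Q, Vfun Y D g H x 0 - ((lam * ‖u‖ : ℝ) : EReal) ≤ Vfun Y D g H x u)
    (hz : z ∈ Y) : Vfun Y D g H x 0 ≤ ((g (x, z) + lam * infDist (H (x, z)) D : ℝ) : EReal) := by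
  obtain ⟨p, hp, hdist⟩ := hD.exists_infDist_eq_dist hD' (H (x, z))
  have hle := (hcalm (p - H (x, z))).trans (Vfun_le_of_mem hz (by simpa using hp))
  rwa [EReal.sub_le_iff_le_add (.inl (EReal.coe_ne_bot _)) (.inl (EReal.coe_ne_top _)),
    ← EReal.coe_add, ← dist_eq_norm', ← hdist] at hle

theorem PFeas.sub_le_Vfun_zero (h : PFeas X Y D g H τ x y) :
    ((g (x, y) - τ : ℝ) : EReal) ≤ Vfun Y D g H x 0 :=
  le_iInf₂ fun w hw => EReal.coe_le_coe_iff.2 <| by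
    linarith [h.2.2.2 w hw.1 (by simpa using hw.2)]

theorem PFeas.sub_le_add_mul_infDist [ProperSpace Q] (hD : IsClosed D) (hD' : D.Nonempty)
    (h : PFeas X Y D g H τ x y) (hcalm : CalmAtWith Y D g H x lam) (hz : z ∈ Y) :
    g (x, y) - τ ≤ g (x, z) + lam * infDist (H (x, z)) D :=
  EReal.coe_le_coe_iff.1 <|
    h.sub_le_Vfun_zero.trans (Vfun_zero_le_add_mul_infDist hD hD' hcalm.2 hz)

theorem exists_lt_add_mul_infDist_of_calm [ProperSpace Q] (hD : IsClosed D) (hD' : D.Nonempty)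
    (hcalm : ∀ u : Q, Vfun Y D g H x 0 - ((lam * ‖u‖ : ℝ) : EReal) ≤ Vfun Y D g H x u)
    (hz : z ∈ Y) {κ : ℝ} (hκ : 0 < κ) :
    ∃ w ∈ Y, H (x, w) ∈ D ∧ g (x, w) < g (x, z) + lam * infDist (H (x, z)) D + κ := by
  have hlt : Vfun Y D g H x 0 < ((g (x, z) + lam * infDist (H (x, z)) D + κ : ℝ) : EReal) :=
    (Vfun_zero_le_add_mul_infDist hD hD' hcalm hz).trans_lt (EReal.coe_lt_coe_iff.2 (by linarith))
  obtain ⟨w, hw, hwD, hgw⟩ := Vfun_lt_iff.1 hlt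
  exact ⟨w, hw, by simpa using hwD, EReal.coe_lt_coe_iff.1 hgw⟩

end ValueFunction

section Approximation

variable {X : Set (Rn n)} {Y Yn : Set (Rn m)} {D : Set Q} {g gn : Rn n × Rn m → ℝ}
  {H Hn : Rn n × Rn m → Q} {x : Rn n} {y : Rn m} {u : Q} {α lam lamBar τn δ η : ℝ}

/-- Witness: `(x, y)`, with `u` moving `H^ν(x, y)` to a nearest point of `D` and `-α` absorbing
the errors `δ`, `λ̄η` and `|τ^ν - τ|` in the lower-level constraint. -/
theorem PnuVal_le_add_of_exact_penalty [ProperSpace Q] (hD : IsClosed D) (hD' : D.Nonempty)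
    {fn : Rn n × Rn m → EReal} {σn θn τ : ℝ} (hx : x ∈ X) (hy : y ∈ Y) (hHy : H (x, y) ∈ D)
    (hpen : ∀ z ∈ Y, g (x, y) - τ ≤ g (x, z) + lam * infDist (H (x, z)) D)
    (hlam : 0 ≤ lam) (hlamBar : lam ≤ lamBar) (hYn : Yn ⊆ Y)
    (hg : ∀ z ∈ Y, |gn (x, z) - g (x, z)| ≤ δ)
    (hH : ∀ z ∈ Y, |infDist (Hn (x, z)) D - infDist (H (x, z)) D| ≤ η)
    (hσn : 0 ≤ σn) :
    PnuVal X Y D Yn fn gn Hn σn θn lamBar τn ≤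
      fn (x, y) + ((σn * η + θn * (2 * δ + lamBar * η + |τn - τ|) : ℝ) : EReal) := by
  obtain ⟨p, hp, hdist⟩ := hD.exists_infDist_eq_dist hD' (Hn (x, y))
  have hδ : 0 ≤ δ := (abs_nonneg _).trans (hg y hy)
  have hη : 0 ≤ η := (abs_nonneg _).trans (hH y hy)
  have hu : ‖p - Hn (x, y)‖ ≤ η := by
    have h := hH y hy
    rwa [infDist_zero_of_mem hHy, sub_zero, abs_of_nonneg infDist_nonneg, hdist,
      dist_eq_norm'] at h
  have hfeas : PnuFeas X Y D Yn gn Hn lamBar τn x y (p - Hn (x, y))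
      (-(2 * δ + lamBar * η + |τn - τ|)) lam := by
    refine ⟨hx, hy, by linarith [abs_nonneg (τn - τ), mul_nonneg (hlam.trans hlamBar) hη],
      hlam, hlamBar, by simpa using hp, fun z hz => ?_⟩
    have hzY := hYn hz
    have hgy := abs_le.1 (hg y hy)
    have hgz := abs_le.1 (hg z hzY)
    have hHz := abs_le.1 (hH z hzY)
    have hpenz : lam * infDist (H (x, z)) D ≤ lam * infDist (Hn (x, z)) D + lamBar * η := by
      nlinarith
    linarith [hpen z hzY, neg_abs_le (τn - τ)]
  refine (iInf_le_of_le x <| iInf_le_of_le y <| iInf_le_of_le (p - Hn (x, y)) <|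
    iInf_le_of_le (-(2 * δ + lamBar * η + |τn - τ|)) <| iInf_le_of_le lam <|
    iInf_le _ hfeas).trans ?_
  unfold PnuObj
  gcongr
  nlinarith [mul_le_mul_of_nonneg_left hu hσn]

theorem PnuFeas.add_le_of_mem
    (h : PnuFeas X Y D Yn gn Hn lamBar τn x y u α lam) {w : Rn m} (hwn : w ∈ Yn) (hw : w ∈ Y)
    (hwD : H (x, w) ∈ D) (hg : ∀ z ∈ Y, |gn (x, z) - g (x, z)| ≤ δ)
    (hH : ∀ z ∈ Y, |infDist (Hn (x, z)) D - infDist (H (x, z)) D| ≤ η) :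
    g (x, y) + α ≤ g (x, w) + 2 * δ + lamBar * η + τn := by
  obtain ⟨-, hy, -, hlam, hlamBar, -, hlower⟩ := h
  have hHw := hH w hw
  rw [infDist_zero_of_mem hwD, sub_zero, abs_of_nonneg infDist_nonneg] at hHw
  have hpen : lam * infDist (Hn (x, w)) D ≤ lamBar * η :=
    mul_le_mul hlamBar hHw infDist_nonneg (hlam.trans hlamBar)
  linarith [hlower w hwn, abs_le.1 (hg y hy), abs_le.1 (hg w hw)]

theorem PnuFeas.infDist_le (h : PnuFeas X Y D Yn gn Hn lamBar τn x y u α lam)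
    (hH : |infDist (Hn (x, y)) D - infDist (H (x, y)) D| ≤ η) :
    infDist (H (x, y)) D ≤ ‖u‖ + η := by
  have hu : infDist (Hn (x, y)) D ≤ ‖u‖ := by
    simpa using infDist_le_dist_of_mem (x := Hn (x, y)) h.2.2.2.2.2.1
  linarith [abs_le.1 hH]

theorem PnuFeas.le_PnuObj {fn : Rn n × Rn m → EReal} {σn θn : ℝ}
    (h : PnuFeas X Y D Yn gn Hn lamBar τn x y u α lam) (hσn : 0 ≤ σn) (hθn : 0 ≤ θn) :
    fn (x, y) ≤ PnuObj fn σn θn x y u α := by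
  refine le_add_of_nonneg_right (EReal.coe_nonneg.2 ?_)
  nlinarith [mul_nonneg hσn (norm_nonneg u), h.2.2.1]

end Approximation

namespace BasicAssumption

variable {X : Set (Rn n)} {Y : Set (Rn m)} {D : Set Q} {Yν : ℕ → Set (Rn m)}
  {f : Rn n × Rn m → EReal} {fν : ℕ → Rn n × Rn m → EReal}
  {g : Rn n × Rn m → ℝ} {gν : ℕ → Rn n × Rn m → ℝ}
  {H : Rn n × Rn m → Q} {Hν : ℕ → Rn n × Rn m → Q}
  {σ θ lamBar τν δ η : ℕ → ℝ} {τ : ℝ}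

theorem comp (ba : BasicAssumption X Y D Yν f fν g gν H Hν σ θ lamBar τν δ η) {φ : ℕ → ℕ}
    (hφ : StrictMono φ) :
    BasicAssumption X Y D (Yν ∘ φ) f (fν ∘ φ) g (gν ∘ φ) H (Hν ∘ φ)
      (σ ∘ φ) (θ ∘ φ) (lamBar ∘ φ) (τν ∘ φ) (δ ∘ φ) (η ∘ φ) :=
  have hφ' := hφ.tendsto_atTop
  { ba with
    Yν_nonempty := fun k => ba.Yν_nonempty (φ k)
    Yν_subset := fun k => ba.Yν_subset (φ k)
    Yν_conv := fun y => (ba.Yν_conv y).comp hφ'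
    δ_lim := ba.δ_lim.comp hφ'
    g_err := fun k => ba.g_err (φ k)
    η_lim := ba.η_lim.comp hφ'
    H_err := fun k => ba.H_err (φ k)
    fν_ne_bot := fun k => ba.fν_ne_bot (φ k)
    f_limsup := fun x hx y hy => hφ'.limsup_comp_le_limsup.trans (ba.f_limsup x hx y hy)
    f_liminf := fun x hx y hy xs ys hxs hys hcx hcy => by
      refine (ba.f_liminf x hx y hy _ _ (Function.extend_mem hxs hx)
        (Function.extend_mem hys hy)
        (tendsto_extend_of_strictMono hφ hcx) (tendsto_extend_of_strictMono hφ hcy)).trans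
        (hφ'.liminf_le_liminf_comp.trans_eq ?_)
      simp only [Function.comp_def, hφ.injective.extend_apply]
    σ_nonneg := fun k => ba.σ_nonneg (φ k)
    θ_nonneg := fun k => ba.θ_nonneg (φ k)
    lamBar_nonneg := fun k => ba.lamBar_nonneg (φ k)
    τν_nonneg := fun k => ba.τν_nonneg (φ k)
    lamBar_top := ba.lamBar_top.comp hφ'
    ση_lim := ba.ση_lim.comp hφ'
    θlamη_lim := ba.θlamη_lim.comp hφ'
    θδ_lim := ba.θδ_lim.comp hφ' }

variable (ba : BasicAssumption X Y D Yν f fν g gν H Hν σ θ lamBar τν δ η)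
include ba

theorem η_nonneg (ν : ℕ) : 0 ≤ η ν := by
  obtain ⟨x, hx⟩ := ba.X_nonempty
  obtain ⟨y, hy⟩ := ba.Y_nonempty
  exact (abs_nonneg _).trans (ba.H_err ν x hx y hy)

theorem tendsto_lamBar_mul_η (hθ : Tendsto θ atTop atTop) :
    Tendsto (fun ν => lamBar ν * η ν) atTop (𝓝 0) :=
  tendsto_zero_of_eventually_mul_le (C := 1) hθ
    (.of_forall fun ν => mul_nonneg (ba.lamBar_nonneg ν) (ba.η_nonneg ν))
    ((ba.θlamη_lim.eventually_le_const one_pos).mono fun ν h => by rwa [← mul_assoc])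

theorem tendsto_penalty_bound_zero (hrate : Tendsto (fun ν => θ ν * |τν ν - τ|) atTop (𝓝 0)) :
    Tendsto (fun ν => σ ν * η ν + θ ν * (2 * δ ν + lamBar ν * η ν + |τν ν - τ|))
      atTop (𝓝 0) := by
  have h := ba.ση_lim.add (((ba.θδ_lim.const_mul 2).add ba.θlamη_lim).add hrate)
  rw [show (0 : ℝ) = 0 + (2 * 0 + 0 + 0) by norm_num]
  exact h.congr fun ν => by ring

theorem limsup_PnuVal_le [ProperSpace Q]
    (hrate : Tendsto (fun ν => θ ν * |τν ν - τ|) atTop (𝓝 0)) {x : Rn n} {y : Rn m}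
    (hfeas : PFeas X Y D g H τ x y) (hcalm : CalmAt Y D g H x) :
    limsup (fun ν => PnuVal X Y D (Yν ν) (fν ν) (gν ν) (Hν ν) (σ ν) (θ ν) (lamBar ν) (τν ν))
      atTop ≤ f (x, y) := by
  obtain ⟨lam, hcalm⟩ := hcalm
  have hbound : ∀ᶠ ν in atTop,
      PnuVal X Y D (Yν ν) (fν ν) (gν ν) (Hν ν) (σ ν) (θ ν) (lamBar ν) (τν ν) ≤
        fν ν (x, y) +
          ((σ ν * η ν + θ ν * (2 * δ ν + lamBar ν * η ν + |τν ν - τ|) : ℝ) : EReal) := by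
    filter_upwards [ba.lamBar_top.eventually_ge_atTop lam] with ν hν
    exact PnuVal_le_add_of_exact_penalty ba.D_closed ba.D_nonempty hfeas.1 hfeas.2.1 hfeas.2.2.1
      (fun z hz => hfeas.sub_le_add_mul_infDist ba.D_closed ba.D_nonempty hcalm hz) hcalm.1 hν
      (ba.Yν_subset ν) (ba.g_err ν x hfeas.1) (ba.H_err ν x hfeas.1) (ba.σ_nonneg ν)
  exact (EReal.limsup_le_of_le_add_of_tendsto_zero hbound
    (ba.tendsto_penalty_bound_zero hrate)).trans (ba.f_limsup x hfeas.1 y hfeas.2.1)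

variable {xs : ℕ → Rn n} {ys : ℕ → Rn m} {us : ℕ → Q} {αs lams : ℕ → ℝ} {hatx : Rn n}
  {haty : Rn m}

theorem H_mem_of_tendsto
    (hfeas : ∀ ν, PnuFeas X Y D (Yν ν) (gν ν) (Hν ν) (lamBar ν) (τν ν)
      (xs ν) (ys ν) (us ν) (αs ν) (lams ν))
    (hx : hatx ∈ X) (hy : haty ∈ Y) (hcx : Tendsto xs atTop (𝓝 hatx))
    (hcy : Tendsto ys atTop (𝓝 haty)) (hu : Tendsto (fun ν => ‖us ν‖) atTop (𝓝 0)) :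
    H (hatx, haty) ∈ D := by
  have hH := ba.H_cont.tendsto_comp_prodMk hx hy (fun ν => (hfeas ν).1) (fun ν => (hfeas ν).2.1)
    hcx hcy
  rw [ba.D_closed.mem_iff_infDist_zero ba.D_nonempty]
  refine le_antisymm (le_of_tendsto_of_tendsto ((continuous_infDist_pt D).tendsto _ |>.comp hH)
    (by simpa using hu.add ba.η_lim) (.of_forall fun ν => ?_)) infDist_nonneg
  exact (hfeas ν).infDist_le (ba.H_err ν _ (hfeas ν).1 _ (hfeas ν).2.1)

theorem g_le_add_of_tendsto [ProperSpace Q] (hθ : Tendsto θ atTop atTop)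
    (hrate : Tendsto (fun ν => θ ν * |τν ν - τ|) atTop (𝓝 0))
    (hfeas : ∀ ν, PnuFeas X Y D (Yν ν) (gν ν) (Hν ν) (lamBar ν) (τν ν)
      (xs ν) (ys ν) (us ν) (αs ν) (lams ν))
    (hx : hatx ∈ X) (hy : haty ∈ Y) (hcx : Tendsto xs atTop (𝓝 hatx))
    (hcy : Tendsto ys atTop (𝓝 haty)) (hα : Tendsto αs atTop (𝓝 0))
    (hloc : LocallyCalmAt Y D g H hatx) (hYν : ∀ᶠ ν in atTop, Yν ν = Y) {z : Rn m}
    (hz : z ∈ Y) (hzD : H (hatx, z) ∈ D) :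
    g (hatx, haty) ≤ g (hatx, z) + τ := by
  obtain ⟨lam, ρ, -, hρ, hcalm⟩ := hloc
  have hxs ν : xs ν ∈ X := (hfeas ν).1
  have hτν : Tendsto τν atTop (𝓝 τ) := by
    have h := tendsto_zero_of_eventually_mul_le (C := 1) hθ (.of_forall fun ν => abs_nonneg _)
      (hrate.eventually_le_const one_pos)
    exact tendsto_iff_norm_sub_tendsto_zero.2 (by simpa only [Real.norm_eq_abs] using h)
  refine le_of_forall_pos_le_add fun κ hκ => ?_
  have hnear : ∀ᶠ ν in atTop, g (xs ν, ys ν) + αs ν ≤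
      g (xs ν, z) + lam * infDist (H (xs ν, z)) D + κ + 2 * δ ν + lamBar ν * η ν + τν ν := by
    filter_upwards [hcx.eventually_mem (closedBall_mem_nhds _ hρ), hYν] with ν hball hYν
    obtain ⟨w, hw, hwD, hgw⟩ :=
      exists_lt_add_mul_infDist_of_calm ba.D_closed ba.D_nonempty (hcalm _ hball) hz hκ
    linarith [(hfeas ν).add_le_of_mem (hYν ▸ hw) hw hwD (ba.g_err ν _ (hxs ν))
      (ba.H_err ν _ (hxs ν))]
  have hz' : ∀ ν : ℕ, z ∈ Y := fun _ => hz
  have hleft := (ba.g_cont.tendsto_comp_prodMk hx hy hxs (fun ν => (hfeas ν).2.1) hcx hcy).add hα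
  have hgz := ba.g_cont.tendsto_comp_prodMk hx hz hxs hz' hcx tendsto_const_nhds
  have hdz := ((continuous_infDist_pt D).tendsto _).comp
    (ba.H_cont.tendsto_comp_prodMk hx hz hxs hz' hcx tendsto_const_nhds)
  have hright := ((((hgz.add (hdz.const_mul lam)).add_const κ).add (ba.δ_lim.const_mul 2)).add
    (ba.tendsto_lamBar_mul_η hθ)).add hτν
  have hlim := le_of_tendsto_of_tendsto hleft hright hnear
  rw [infDist_zero_of_mem hzD] at hlim
  linarith

theorem POpt_and_tendsto_PnuVal [ProperSpace Q] (hσ : Tendsto σ atTop atTop)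
    (hθ : Tendsto θ atTop atTop) {ε : ℕ → ℝ} (hε : Tendsto ε atTop (𝓝 0))
    (hrate : Tendsto (fun ν => θ ν * |τν ν - τ|) atTop (𝓝 0)) {xstar : Rn n} {ystar : Rn m}
    (hopt : POpt X Y D f g H τ xstar ystar) (hcalm : CalmAt Y D g H xstar)
    (hsol : ∀ ν, PnuEps X Y D (Yν ν) (fν ν) (gν ν) (Hν ν)
      (σ ν) (θ ν) (lamBar ν) (τν ν) (ε ν) (xs ν) (ys ν) (us ν) (αs ν) (lams ν))
    (hcx : Tendsto xs atTop (𝓝 hatx)) (hcy : Tendsto ys atTop (𝓝 haty))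
    (hloc : LocallyCalmAt Y D g H hatx) (hYν : ∀ᶠ ν in atTop, Yν ν = Y) :
    POpt X Y D f g H τ hatx haty ∧
    ∃ r : ℝ, PVal X Y D f g H τ = (r : EReal) ∧
      Tendsto (fun ν => PnuVal X Y D (Yν ν) (fν ν) (gν ν) (Hν ν)
        (σ ν) (θ ν) (lamBar ν) (τν ν)) atTop (𝓝 (r : EReal)) := by
  obtain ⟨hfeas_star, hfin, hval⟩ := hopt
  have hfeas ν := (hsol ν).1
  have hx : hatx ∈ X := ba.X_closed.mem_of_tendsto hcx (.of_forall fun ν => (hfeas ν).1)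
  have hy : haty ∈ Y := ba.Y_closed.mem_of_tendsto hcy (.of_forall fun ν => (hfeas ν).2.1)
  have hsup := ba.limsup_PnuVal_le hrate hfeas_star hcalm
  have hinf := ba.f_liminf _ hx _ hy xs ys (fun ν => (hfeas ν).1) (fun ν => (hfeas ν).2.1) hcx hcy
  obtain ⟨C, hC⟩ := EReal.exists_eventually_le_of_add_le (.of_forall fun ν => (hsol ν).2.2)
    (ne_bot_of_le_ne_bot (ba.f_ne_bot _) hinf) (ne_top_of_le_ne_top hfin hsup) hε
  obtain ⟨hu, hα⟩ := tendsto_zero_of_eventually_mul_add_mul_le hσ hθ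
    (.of_forall fun ν => norm_nonneg (us ν)) (.of_forall fun ν => neg_nonneg.2 (hfeas ν).2.2.1)
    (hC.mono fun ν h => by linarith)
  have hfeas_hat : PFeas X Y D g H τ hatx haty :=
    ⟨hx, hy, ba.H_mem_of_tendsto hfeas hx hy hcx hcy hu, fun z hz hzD =>
      ba.g_le_add_of_tendsto hθ hrate hfeas hx hy hcx hcy (by simpa using hα.neg) hloc hYν hz hzD⟩
  have hle := hinf.trans <| EReal.liminf_le_of_le_add_of_tendsto_zero (.of_forall fun ν =>
    ((hfeas ν).le_PnuObj (ba.σ_nonneg ν) (ba.θ_nonneg ν)).trans (hsol ν).2.2) hε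
  have hge : f (xstar, ystar) ≤ f (hatx, haty) := hval ▸ iInf_le_of_le _ (iInf₂_le _ hfeas_hat)
  have heq : f (hatx, haty) = f (xstar, ystar) :=
    le_antisymm ((hle.trans liminf_le_limsup).trans hsup) hge
  have hr := EReal.coe_toReal hfin (ba.f_ne_bot _)
  refine ⟨⟨hfeas_hat, heq ▸ hfin, heq.trans hval⟩, _, hval.symm.trans hr.symm, ?_⟩
  rw [hr]
  exact tendsto_of_le_liminf_of_limsup_le (hge.trans hle) hsup

end BasicAssumption

theorem Pnu_cluster_optimal_of_localCalm_full_general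
    [NormedSpace ℝ Q] [FiniteDimensional ℝ Q]
    (X : Set (Rn n)) (Y : Set (Rn m)) (D : Set Q) (Yν : ℕ → Set (Rn m))
    (f : Rn n × Rn m → EReal) (fν : ℕ → Rn n × Rn m → EReal)
    (g : Rn n × Rn m → ℝ) (gν : ℕ → Rn n × Rn m → ℝ)
    (H : Rn n × Rn m → Q) (Hν : ℕ → Rn n × Rn m → Q)
    (σ θ lamBar τν δ η : ℕ → ℝ) (τ : ℝ)
    (ba : BasicAssumption X Y D Yν f fν g gν H Hν σ θ lamBar τν δ η)
    (hσ : Tendsto σ atTop atTop) (hθ : Tendsto θ atTop atTop)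
    (ε : ℕ → ℝ) (hεlim : Tendsto ε atTop (𝓝 0))
    (hrate : Tendsto (fun ν => θ ν * |τν ν - τ|) atTop (𝓝 0))
    (xstar : Rn n) (ystar : Rn m)
    (hopt : POpt X Y D f g H τ xstar ystar)
    (hcalm : CalmAt Y D g H xstar)
    (xs : ℕ → Rn n) (ys : ℕ → Rn m) (us : ℕ → Q) (αs lams : ℕ → ℝ)
    (hsol : ∀ ν, PnuEps X Y D (Yν ν) (fν ν) (gν ν) (Hν ν)
      (σ ν) (θ ν) (lamBar ν) (τν ν) (ε ν) (xs ν) (ys ν) (us ν) (αs ν) (lams ν))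
    (φ : ℕ → ℕ) (hφ : StrictMono φ)
    (hatx : Rn n) (haty : Rn m)
    (hcx : Tendsto (fun k => xs (φ k)) atTop (𝓝 hatx))
    (hcy : Tendsto (fun k => ys (φ k)) atTop (𝓝 haty))
    (hloc : LocallyCalmAt Y D g H hatx)
    (hYν : ∀ᶠ ν in atTop, Yν ν = Y) :
    POpt X Y D f g H τ hatx haty ∧
    ∃ r : ℝ, PVal X Y D f g H τ = (r : EReal) ∧
      Tendsto (fun k =>
        PnuVal X Y D (Yν (φ k)) (fν (φ k)) (gν (φ k)) (Hν (φ k))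
          (σ (φ k)) (θ (φ k)) (lamBar (φ k)) (τν (φ k))) atTop
        (𝓝 ((r : EReal))) :=
  have hφ' := hφ.tendsto_atTop
  (ba.comp hφ).POpt_and_tendsto_PnuVal (hσ.comp hφ') (hθ.comp hφ') (hεlim.comp hφ')
    (hrate.comp hφ') hopt hcalm (fun k => hsol (φ k)) hcx hcy hloc (hφ'.eventually hYν)

/-- Theorem 2.8(a): optimality under local calmness when `Y^ν = Y` eventually. -/
theorem Pnu_cluster_optimal_of_localCalm_full
    [NormedSpace ℝ Q] [FiniteDimensional ℝ Q]
    (X : Set (Rn n)) (Y : Set (Rn m)) (D : Set Q) (Yν : ℕ → Set (Rn m))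
    (f : Rn n × Rn m → EReal) (fν : ℕ → Rn n × Rn m → EReal)
    (g : Rn n × Rn m → ℝ) (gν : ℕ → Rn n × Rn m → ℝ)
    (H : Rn n × Rn m → Q) (Hν : ℕ → Rn n × Rn m → Q)
    (σ θ lamBar τν δ η : ℕ → ℝ) (τ : ℝ) (hτ : 0 ≤ τ)
    (ba : BasicAssumption X Y D Yν f fν g gν H Hν σ θ lamBar τν δ η)
    (hσ : Tendsto σ atTop atTop) (hθ : Tendsto θ atTop atTop)
    (ε : ℕ → ℝ) (hε0 : ∀ ν, 0 ≤ ε ν) (hεlim : Tendsto ε atTop (𝓝 0))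
    (hrate : Tendsto (fun ν => θ ν * |τν ν - τ|) atTop (𝓝 0))
    (xstar : Rn n) (ystar : Rn m)
    (hopt : POpt X Y D f g H τ xstar ystar)
    (hcalm : CalmAt Y D g H xstar)
    (xs : ℕ → Rn n) (ys : ℕ → Rn m) (us : ℕ → Q) (αs lams : ℕ → ℝ)
    (hsol : ∀ ν, PnuEps X Y D (Yν ν) (fν ν) (gν ν) (Hν ν)
      (σ ν) (θ ν) (lamBar ν) (τν ν) (ε ν) (xs ν) (ys ν) (us ν) (αs ν) (lams ν))
    (φ : ℕ → ℕ) (hφ : StrictMono φ)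
    (hatx : Rn n) (haty : Rn m) (hatu : Q) (hatα : ℝ)
    (hcx : Tendsto (fun k => xs (φ k)) atTop (𝓝 hatx))
    (hcy : Tendsto (fun k => ys (φ k)) atTop (𝓝 haty))
    (hcu : Tendsto (fun k => us (φ k)) atTop (𝓝 hatu))
    (hcα : Tendsto (fun k => αs (φ k)) atTop (𝓝 hatα))
    (hloc : LocallyCalmAt Y D g H hatx)
    (hYν : ∀ᶠ ν in atTop, Yν ν = Y) :
    POpt X Y D f g H τ hatx haty ∧
    ∃ r : ℝ, PVal X Y D f g H τ = (r : EReal) ∧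
      Tendsto (fun k =>
        PnuVal X Y D (Yν (φ k)) (fν (φ k)) (gν (φ k)) (Hν (φ k))
          (σ (φ k)) (θ (φ k)) (lamBar (φ k)) (τν (φ k))) atTop
        (𝓝 ((r : EReal))) :=
  Pnu_cluster_optimal_of_localCalm_full_general X Y D Yν f fν g gν H Hν σ θ lamBar τν δ η τ ba hσ hθ
    ε hεlim hrate xstar ystar hopt hcalm xs ys us αs lams hsol φ hφ hatx haty hcx hcy hloc hYν
end
end

section
/- Fix ν. Suppose D is nonempty, (X × Y) ∩ dom f^ν is nonempty, and for all x ∈ X one has inf_{z∈Y^ν} [ g^ν(x,z) + λ̄^ν · dist(H^ν(x,z), D) ] > −∞. If σ^ν > 0, θ^ν > 0, the functions f^ν and g^ν are lower semicontinuous, H^ν is continuous relative to X×Y, g^ν(·,z) is continuous relative to X for each z ∈ Y^ν, the sets X, Y, D are closed, and the set { (x,y) ∈ X × Y | f^ν(x,y) ≤ γ } is bounded for each γ ∈ ℝ, then there exists an optimal solution of (P)^ν. -/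
open Filter Topology Metric Set

attribute [local instance] Classical.propDecidable

noncomputable section

variable {n m : ℕ} {Q : Type*} [NormedAddCommGroup Q]

/-!
The objective `f^ν(x,y) + σ^ν‖u‖ - θ^ν α` is lower semicontinuous on the feasible set of
`((x, y), u, α, λ)`, which is closed: in the argmin constraint a lower semicontinuous left side is
bounded by a right side continuous in `(x, λ)`. Having compact sublevel sets on `X × Y`, `f^ν` is
bounded below there, so on a sublevel set of the objective `‖u‖` and `-α` are bounded as well, and
`0 ≤ λ ≤ λ̄^ν`. The direct method gives a minimizer once a feasible point of finite value is known:
take `(x, y) ∈ dom f^ν`, `u = d - H^ν(x,y)` for some `d ∈ D`, `λ = λ̄^ν`, and `α` below the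
penalized infimum, which is `> -∞`.
-/

section Semicontinuity

variable {α β : Type*} [TopologicalSpace α] {s : Set α}

theorem LowerSemicontinuousOn.isClosed_inter_preimage_Iic [LinearOrder β] {f : α → β}
    (hf : LowerSemicontinuousOn f s) (hs : IsClosed s) (c : β) :
    IsClosed (s ∩ f ⁻¹' Iic c) := by
  obtain ⟨v, hv, hsv⟩ := lowerSemicontinuousOn_iff_preimage_Iic.1 hf c
  exact hsv ▸ hs.inter hv

theorem IsClosed.inter_setOf_forall_le {ι : Type*} (hs : IsClosed s) {t : Set ι}
    {l : α → ℝ} {r : ι → α → ℝ} (hl : LowerSemicontinuous l)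
    (hr : ∀ i ∈ t, ContinuousOn (r i) s) :
    IsClosed (s ∩ {p | ∀ i ∈ t, l p ≤ r i p}) := by
  have hclosed : ∀ i ∈ t, IsClosed (s ∩ (fun p => l p - r i p) ⁻¹' Iic 0) := fun i hi =>
    (hl.lowerSemicontinuousOn s |>.add (hr i hi).neg.lowerSemicontinuousOn)
      |>.isClosed_inter_preimage_Iic hs 0
  convert hs.inter (isClosed_biInter hclosed) using 1
  ext p
  simp only [mem_inter_iff, mem_ofPred_eq, mem_iInter, mem_preimage, mem_Iic, sub_nonpos]
  grind

theorem LowerSemicontinuous.exists_isMinOn_of_isCompact_inter_preimage_Iic [LinearOrder β]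
    {f : α → β} (hf : LowerSemicontinuous f) {a : α} (ha : a ∈ s) {c : β} (hfa : f a ≤ c)
    (hK : IsCompact (s ∩ f ⁻¹' Iic c)) : ∃ b ∈ s, IsMinOn f s b ∧ f b ≤ c := by
  have hne : (s ∩ f ⁻¹' Iic c).Nonempty := ⟨a, ha, hfa⟩
  obtain ⟨b, ⟨hbs, hbc⟩, hmin⟩ := (hf.lowerSemicontinuousOn _).exists_isMinOn hne hK
  refine ⟨b, hbs, fun p hp => ?_, hbc⟩
  by_cases hpc : f p ≤ c
  · exact hmin ⟨hp, hpc⟩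
  · exact hbc.trans (not_le.1 hpc).le

theorem LowerSemicontinuous.exists_coe_le_of_isCompact_inter_preimage_Iic {f : α → EReal}
    (hf : LowerSemicontinuous f) (hbot : ∀ p ∈ s, f p ≠ ⊥)
    (hK : IsCompact (s ∩ f ⁻¹' Iic 0)) : ∃ c : ℝ, ∀ p ∈ s, (c : EReal) ≤ f p := by
  by_cases hne : ∃ a ∈ s, f a ≤ 0
  · obtain ⟨a, has, hfa⟩ := hne
    obtain ⟨b, hbs, hmin, -⟩ := hf.exists_isMinOn_of_isCompact_inter_preimage_Iic has hfa hK
    obtain ⟨c, -, hc⟩ := EReal.exists_between_coe_real (bot_lt_iff_ne_bot.2 (hbot b hbs))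
    exact ⟨c, fun p hp => hc.le.trans (hmin hp)⟩
  · push Not at hne
    exact ⟨0, fun p hp => (hne p hp).le⟩

end Semicontinuity

section Pnu

variable {X : Set (Rn n)} {Y : Set (Rn m)} {D : Set Q} {Yn : Set (Rn m)}
  {fn : Rn n × Rn m → EReal} {gn : Rn n × Rn m → ℝ} {Hn : Rn n × Rn m → Q}
  {σn θn lamBar τn : ℝ}

variable (X Y D Yn gn Hn lamBar τn) in
def pnuFeasSet : Set ((Rn n × Rn m) × Q × ℝ × ℝ) :=
  {p | PnuFeas X Y D Yn gn Hn lamBar τn p.1.1 p.1.2 p.2.1 p.2.2.1 p.2.2.2}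

variable (fn σn θn) in
def pnuObjective (p : (Rn n × Rn m) × Q × ℝ × ℝ) : EReal :=
  PnuObj fn σn θn p.1.1 p.1.2 p.2.1 p.2.2.1

theorem pnuVal_eq_of_isMinOn {b : (Rn n × Rn m) × Q × ℝ × ℝ}
    (hb : b ∈ pnuFeasSet X Y D Yn gn Hn lamBar τn)
    (hmin : IsMinOn (pnuObjective fn σn θn) (pnuFeasSet X Y D Yn gn Hn lamBar τn) b) :
    PnuVal X Y D Yn fn gn Hn σn θn lamBar τn = pnuObjective fn σn θn b :=
  le_antisymm
    (iInf_le_of_le b.1.1 <| iInf_le_of_le b.1.2 <| iInf_le_of_le b.2.1 <|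
      iInf_le_of_le b.2.2.1 <| iInf_le_of_le b.2.2.2 <| iInf_le _ hb)
    (le_iInf fun x => le_iInf fun y => le_iInf fun u => le_iInf fun α => le_iInf fun lam =>
      le_iInf fun h => isMinOn_iff.1 hmin ((x, y), u, α, lam) h)

theorem lowerSemicontinuous_pnuObjective (hflsc : LowerSemicontinuous fn) :
    LowerSemicontinuous (pnuObjective (Q := Q) fn σn θn) := by
  have hpen : Continuous fun p : (Rn n × Rn m) × Q × ℝ × ℝ =>
      ((σn * ‖p.2.1‖ - θn * p.2.2.1 : ℝ) : EReal) :=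
    EReal.continuous_coe_iff.2 (by fun_prop)
  exact (hflsc.comp continuous_fst).add' hpen.lowerSemicontinuous fun p =>
    EReal.continuousAt_add (Or.inr (EReal.coe_ne_bot _)) (Or.inr (EReal.coe_ne_top _))

theorem isClosed_pnuFeasSet (hglsc : LowerSemicontinuous gn) (hHcont : ContinuousOn Hn (X ×ˢ Y))
    (hgxcont : ∀ z ∈ Yn, ContinuousOn (fun x : Rn n => gn (x, z)) X) (hYnY : Yn ⊆ Y)
    (hXc : IsClosed X) (hYc : IsClosed Y) (hDc : IsClosed D) :
    IsClosed (pnuFeasSet X Y D Yn gn Hn lamBar τn) := by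
  set S : Set ((Rn n × Rn m) × Q × ℝ × ℝ) := (X ×ˢ Y) ×ˢ univ ×ˢ Iic 0 ×ˢ Icc 0 lamBar
  have hS : IsClosed S :=
    (hXc.prod hYc).prod (isClosed_univ.prod (isClosed_Iic.prod isClosed_Icc))
  have hHS : ContinuousOn (fun p : (Rn n × Rn m) × Q × ℝ × ℝ => Hn p.1) S :=
    hHcont.comp continuousOn_fst fun p hp => hp.1
  have hmemD : IsClosed (S ∩ (fun p => Hn p.1 + p.2.1) ⁻¹' D) :=
    (hHS.add continuousOn_snd.fst).preimage_isClosed_of_isClosed hS hDc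
  have hargmin : IsClosed (S ∩ {p | ∀ z ∈ Yn, gn p.1 + p.2.2.1 ≤
      gn (p.1.1, z) + p.2.2.2 * infDist (Hn (p.1.1, z)) D + τn}) := by
    refine hS.inter_setOf_forall_le ((hglsc.comp continuous_fst).add
      continuous_snd.snd.fst.lowerSemicontinuous) fun z hz => ?_
    have hHz : ContinuousOn (fun p : (Rn n × Rn m) × Q × ℝ × ℝ => Hn (p.1.1, z)) S :=
      hHcont.comp (continuousOn_fst.fst.prodMk continuousOn_const) fun p hp => ⟨hp.1.1, hYnY hz⟩
    have hgz : ContinuousOn (fun p : (Rn n × Rn m) × Q × ℝ × ℝ => gn (p.1.1, z)) S :=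
      (hgxcont z hz).comp continuousOn_fst.fst fun p hp => hp.1.1
    exact (hgz.add (continuousOn_snd.snd.snd.mul
      ((continuous_infDist_pt D).comp_continuousOn hHz))).add continuousOn_const
  convert hmemD.inter hargmin using 1
  ext ⟨⟨x, y⟩, u, α, lam⟩
  simp only [pnuFeasSet, PnuFeas, S, mem_ofPred_eq, mem_inter_iff, mem_prod, mem_univ,
    mem_Iic, mem_Icc, mem_preimage]
  tauto

theorem isBounded_pnuFeasSet_inter_preimage_Iic (hσ : 0 < σn) (hθ : 0 < θn)
    {c : ℝ} (hc : ∀ p ∈ X ×ˢ Y, (c : EReal) ≤ fn p) {γ : ℝ}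
    (hlevel : Bornology.IsBounded ((X ×ˢ Y) ∩ fn ⁻¹' Iic (γ : EReal))) :
    Bornology.IsBounded
      (pnuFeasSet X Y D Yn gn Hn lamBar τn ∩ pnuObjective fn σn θn ⁻¹' Iic (γ : EReal)) := by
  refine (hlevel.prod <| (isBounded_closedBall (x := (0 : Q)) (r := (γ - c) / σn)).prod <|
    isBounded_Icc (-((γ - c) / θn)) 0 |>.prod <| isBounded_Icc 0 lamBar).subset ?_
  rintro ⟨⟨x, y⟩, u, α, lam⟩ ⟨hfeas, hobj⟩
  obtain ⟨hx, hy, hα, hlam0, hlam, -⟩ : PnuFeas X Y D Yn gn Hn lamBar τn x y u α lam := hfeas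
  have hσu : 0 ≤ σn * ‖u‖ := mul_nonneg hσ.le (norm_nonneg u)
  have hθα : θn * α ≤ 0 := mul_nonpos_of_nonneg_of_nonpos hθ.le hα
  have hpen : 0 ≤ σn * ‖u‖ - θn * α := by linarith
  change fn (x, y) + ((σn * ‖u‖ - θn * α : ℝ) : EReal) ≤ γ at hobj
  have hfn : fn (x, y) ≤ γ := (le_add_of_nonneg_right (EReal.coe_nonneg.2 hpen)).trans hobj
  have hsum : c + (σn * ‖u‖ - θn * α) ≤ γ := by
    rw [← EReal.coe_le_coe_iff, EReal.coe_add]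
    exact (add_le_add_left (hc (x, y) ⟨hx, hy⟩) _).trans hobj
  refine ⟨⟨⟨hx, hy⟩, hfn⟩, ?_, ⟨?_, hα⟩, hlam0, hlam⟩
  · rw [mem_closedBall_zero_iff, le_div_iff₀ hσ]
    linarith
  · rw [neg_le, le_div_iff₀ hθ]
    linarith

theorem exists_mem_pnuFeasSet_pnuObjective_ne_top (hlamBar : 0 ≤ lamBar) (hD : D.Nonempty)
    (hdom : ∃ x ∈ X, ∃ y ∈ Y, fn (x, y) ≠ ⊤)
    (hbdd : ∀ x ∈ X, muSet Yn D gn Hn x lamBar ≠ ⊥) :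
    ∃ p ∈ pnuFeasSet X Y D Yn gn Hn lamBar τn, pnuObjective fn σn θn p ≠ ⊤ := by
  obtain ⟨x, hx, y, hy, hfxy⟩ := hdom
  obtain ⟨d, hd⟩ := hD
  obtain ⟨M, -, hM⟩ := EReal.exists_between_coe_real (bot_lt_iff_ne_bot.2 (hbdd x hx))
  have hMle : ∀ z ∈ Yn, M ≤ gn (x, z) + lamBar * infDist (Hn (x, z)) D := fun z hz =>
    EReal.coe_le_coe_iff.1 (hM.le.trans (iInf₂_le z hz))
  refine ⟨((x, y), d - Hn (x, y), min 0 (M + τn - gn (x, y)), lamBar),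
    ⟨hx, hy, min_le_left _ _, hlamBar, le_rfl, by simpa using hd, fun z hz => ?_⟩,
    EReal.add_ne_top hfxy (EReal.coe_ne_top _)⟩
  linarith [min_le_right 0 (M + τn - gn (x, y)), hMle z hz]

end Pnu

theorem Pnu_optimal_solution_exists_general
    [NormedSpace ℝ Q] [FiniteDimensional ℝ Q]
    (X : Set (Rn n)) (Y : Set (Rn m)) (D : Set Q) (Yn : Set (Rn m))
    (fn : Rn n × Rn m → EReal) (gn : Rn n × Rn m → ℝ) (Hn : Rn n × Rn m → Q)
    (σn θn lamBar τn : ℝ)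
    (hlamBar : 0 ≤ lamBar)
    (hfn_bot : ∀ p, fn p ≠ ⊥)
    (hYnY : Yn ⊆ Y)
    (hD : D.Nonempty)
    (hdom : ∃ x ∈ X, ∃ y ∈ Y, fn (x, y) ≠ ⊤)
    (hbdd : ∀ x ∈ X, muSet Yn D gn Hn x lamBar ≠ ⊥)
    (hσ : 0 < σn) (hθ : 0 < θn)
    (hflsc : LowerSemicontinuous fn) (hglsc : LowerSemicontinuous gn)
    (hHcont : ContinuousOn Hn (X ×ˢ Y))
    (hgxcont : ∀ z ∈ Yn, ContinuousOn (fun x : Rn n => gn (x, z)) X)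
    (hXc : IsClosed X) (hYc : IsClosed Y) (hDc : IsClosed D)
    (hlevel : ∀ γ : ℝ, Bornology.IsBounded
      {p : Rn n × Rn m | p.1 ∈ X ∧ p.2 ∈ Y ∧ fn p ≤ (γ : EReal)}) :
    ∃ (x : Rn n) (y : Rn m) (u : Q) (α lam : ℝ),
      PnuFeas X Y D Yn gn Hn lamBar τn x y u α lam ∧
      PnuObj fn σn θn x y u α ≠ ⊤ ∧
      PnuObj fn σn θn x y u α = PnuVal X Y D Yn fn gn Hn σn θn lamBar τn := by
  set F := pnuFeasSet X Y D Yn gn Hn lamBar τn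
  set Φ := pnuObjective (Q := Q) fn σn θn
  have hF : IsClosed F := isClosed_pnuFeasSet hglsc hHcont hgxcont hYnY hXc hYc hDc
  have hΦ : LowerSemicontinuous Φ := lowerSemicontinuous_pnuObjective hflsc
  have hsublevel : ∀ γ : ℝ, Bornology.IsBounded ((X ×ˢ Y) ∩ fn ⁻¹' Iic (γ : EReal)) :=
    fun γ => by convert hlevel γ using 1; ext; simp [and_assoc]
  obtain ⟨c, hc⟩ := hflsc.exists_coe_le_of_isCompact_inter_preimage_Iic (fun p _ => hfn_bot p)
    (isCompact_of_isClosed_isBounded ((hXc.prod hYc).inter (hflsc.isClosed_preimage 0))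
      (hsublevel 0))
  obtain ⟨p₀, hp₀F, hp₀⟩ : ∃ p ∈ F, Φ p ≠ ⊤ :=
    exists_mem_pnuFeasSet_pnuObjective_ne_top hlamBar hD hdom hbdd
  set γ := (Φ p₀).toReal
  obtain ⟨b, hbF, hbmin, hbγ⟩ := hΦ.exists_isMinOn_of_isCompact_inter_preimage_Iic hp₀F
    (EReal.le_coe_toReal hp₀) (isCompact_of_isClosed_isBounded
      (hF.inter (hΦ.isClosed_preimage γ)) (isBounded_pnuFeasSet_inter_preimage_Iic hσ hθ hc
        (hsublevel γ)))
  exact ⟨b.1.1, b.1.2, b.2.1, b.2.2.1, b.2.2.2, hbF, (hbγ.trans_lt (EReal.coe_lt_top γ)).ne,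
    (pnuVal_eq_of_isMinOn hbF hbmin).symm⟩

/-- Proposition 4.1(b): existence of an optimal solution of (P)^ν under
lower semicontinuity, continuity and level-boundedness conditions. -/
theorem Pnu_optimal_solution_exists
    [NormedSpace ℝ Q] [FiniteDimensional ℝ Q]
    (X : Set (Rn n)) (Y : Set (Rn m)) (D : Set Q) (Yn : Set (Rn m))
    (fn : Rn n × Rn m → EReal) (gn : Rn n × Rn m → ℝ) (Hn : Rn n × Rn m → Q)
    (σn θn lamBar τn : ℝ)
    (hlamBar : 0 ≤ lamBar) (hτn : 0 ≤ τn)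
    (hfn_bot : ∀ p, fn p ≠ ⊥)
    (hYnne : Yn.Nonempty) (hYnY : Yn ⊆ Y)
    (hD : D.Nonempty)
    (hdom : ∃ x ∈ X, ∃ y ∈ Y, fn (x, y) ≠ ⊤)
    (hbdd : ∀ x ∈ X, muSet Yn D gn Hn x lamBar ≠ ⊥)
    (hσ : 0 < σn) (hθ : 0 < θn)
    (hflsc : LowerSemicontinuous fn) (hglsc : LowerSemicontinuous gn)
    (hHcont : ContinuousOn Hn (X ×ˢ Y))
    (hgxcont : ∀ z ∈ Yn, ContinuousOn (fun x : Rn n => gn (x, z)) X)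
    (hXc : IsClosed X) (hYc : IsClosed Y) (hDc : IsClosed D)
    (hlevel : ∀ γ : ℝ, Bornology.IsBounded
      {p : Rn n × Rn m | p.1 ∈ X ∧ p.2 ∈ Y ∧ fn p ≤ (γ : EReal)}) :
    ∃ (x : Rn n) (y : Rn m) (u : Q) (α lam : ℝ),
      PnuFeas X Y D Yn gn Hn lamBar τn x y u α lam ∧
      PnuObj fn σn θn x y u α ≠ ⊤ ∧
      PnuObj fn σn θn x y u α = PnuVal X Y D Yn fn gn Hn σn θn lamBar τn :=
  Pnu_optimal_solution_exists_general X Y D Yn fn gn Hn σn θn lamBar τn hlamBar hfn_bot hYnY hD hdom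
    hbdd hσ hθ hflsc hglsc hHcont hgxcont hXc hYc hDc hlevel
end
end

section
/- Fix ν. Suppose X, Y, D are nonempty closed sets, Y^ν is nonempty and compact, g^ν and H^ν are continuous, f^ν is continuous relative to its domain dom f^ν, which is closed, and for each x̄ ∈ X and ε > 0 there is ρ > 0 such that for all z ∈ Y^ν and x ∈ X with ‖x − x̄‖₂ ≤ ρ: |g^ν(x,z) − g^ν(x̄,z)| ≤ ε and ‖H^ν(x,z) − H^ν(x̄,z)‖ ≤ ε. Let the outer approximation algorithm generate iterates: starting from (x⁰,y⁰,u⁰,α⁰,λ⁰) ∈ C and Y^ν₀ = ∅, at each step k ≥ 1 choose z^k ∈ δ^k-argmin_{z∈Y^ν} [ g^ν(x^{k−1},z) + λ^{k−1}·dist(H^ν(x^{k−1},z), D) ], set Y^ν_k = Y^ν_{k−1} ∪ {z^k}, and choose (x^k,y^k,u^k,α^k,λ^k) ∈ ε^k-argmin_{w∈C} { ψ₀(w) | ψ_z(w) ≤ 0 for all z ∈ Y^ν_k }, with ε^k, δ^k → 0. If along a subsequence N the iterates (x^k,y^k,u^k,α^k,λ^k) converge to (x̂,ŷ,û,α̂,λ̂),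 then (x̂,ŷ,û,α̂,λ̂) is an optimal solution of (P)^ν and ψ₀(x^k,y^k,u^k,α^k,λ^k) → 𝔪^ν along N. -/
open Filter Topology Metric Set

attribute [local instance] Classical.propDecidable

noncomputable section

variable {n m : ℕ} {Q : Type*} [NormedAddCommGroup Q]

/-- Membership in the set `C` of Section 4. -/
def Cmem (X : Set (Rn n)) (Y : Set (Rn m)) (D : Set Q)
    (fn : Rn n × Rn m → EReal) (Hn : Rn n × Rn m → Q) (lamBar : ℝ)
    (x : Rn n) (y : Rn m) (u : Q) (α lam : ℝ) : Prop :=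
  x ∈ X ∧ y ∈ Y ∧ α ≤ 0 ∧ 0 ≤ lam ∧ lam ≤ lamBar ∧
    Hn (x, y) + u ∈ D ∧ fn (x, y) ≠ ⊤

/-- The constraint function `ψ_z`. -/
def psiz (D : Set Q) (gn : Rn n × Rn m → ℝ) (Hn : Rn n × Rn m → Q) (τn : ℝ)
    (z : Rn m) (x : Rn n) (y : Rn m) (α lam : ℝ) : ℝ :=
  gn (x, y) + α - gn (x, z) - lam * infDist (Hn (x, z)) D - τn

/-- Feasibility of the master problem with constraint index set `S`:
`w ∈ C` and `ψ_z(w) ≤ 0` for all `z ∈ S`. -/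
def MFeas (X : Set (Rn n)) (Y : Set (Rn m)) (D : Set Q)
    (fn : Rn n × Rn m → EReal) (gn : Rn n × Rn m → ℝ) (Hn : Rn n × Rn m → Q)
    (lamBar τn : ℝ) (S : Set (Rn m))
    (x : Rn n) (y : Rn m) (u : Q) (α lam : ℝ) : Prop :=
  Cmem X Y D fn Hn lamBar x y u α lam ∧
    ∀ z ∈ S, psiz D gn Hn τn z x y α lam ≤ 0

/-- Minimum value of the master problem with constraint index set `S`;
for `S = Y^ν` this is the minimum value `𝔪^ν` of (P)^ν. -/
def MVal (X : Set (Rn n)) (Y : Set (Rn m)) (D : Set Q)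
    (fn : Rn n × Rn m → EReal) (gn : Rn n × Rn m → ℝ) (Hn : Rn n × Rn m → Q)
    (σn θn lamBar τn : ℝ) (S : Set (Rn m)) : EReal :=
  ⨅ (x : Rn n) (y : Rn m) (u : Q) (α : ℝ) (lam : ℝ)
    (_ : MFeas X Y D fn gn Hn lamBar τn S x y u α lam),
    PnuObj fn σn θn x y u α


/-!
The limit point lies in `C` because `C` is closed, and the objective converges along the
subsequence because `f^ν` is continuous on its closed domain. For feasibility fix `z ∈ Y^ν`:
the cut `z^{j+1}` is imposed on every later master problem, so in the limit
`ψ_{z^{j+1}}(ŵ) ≤ 0`. As `(x^j, λ^j) → (x̂, λ̂)`, the penalty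
`g^ν(x, ·) + λ dist(H^ν(x, ·), D)` converges uniformly on the compact set `Y^ν`, so the
`δ^{j+1}`-optimality of `z^{j+1}` for the penalty at `(x^j, λ^j)` turns these cuts into
`ψ_z(ŵ) ≤ 0` up to an error that vanishes with `j`. Finally `Y^ν_k ⊆ Y^ν` gives
`ψ₀(w^k) ≤ 𝔪^ν + ε^k`, whose limit is `ψ₀(ŵ) ≤ 𝔪^ν`; the reverse inequality is feasibility.
-/

theorem tendsto_dist_apply_of_isCompact {α β E ι : Type*} [TopologicalSpace α]
    [TopologicalSpace β] [PseudoMetricSpace E] {f : α → β → E} (hf : Continuous f.uncurry)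
    {k : Set β} (hk : IsCompact k) {l : Filter ι} {p : ι → α} {q : α}
    (hp : Tendsto p l (𝓝 q)) {ζ : ι → β} (hζ : ∀ i, ζ i ∈ k) :
    Tendsto (fun i => dist (f (p i) (ζ i)) (f q (ζ i))) l (𝓝 0) := by
  refine Metric.tendsto_nhds.2 fun e he => ?_
  obtain ⟨v, hv, hvk⟩ := hk.mem_uniformity_of_prod hf.continuousOn (mem_univ q)
    (Metric.dist_mem_uniformity he)
  rw [nhdsWithin_univ] at hv
  filter_upwards [hp hv] with i hi
  simpa using hvk (p i) hi (ζ i) (hζ i)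

theorem le_of_tendsto_of_approx_cuts {A B ι : Type*} [TopologicalSpace A]
    [TopologicalSpace B]
    {P : A → B → ℝ} (hP : Continuous P.uncurry) {K : Set B} (hK : IsCompact K)
    {l : Filter ι} [l.NeBot] {p : ι → A} {p₀ : A} (hp : Tendsto p l (𝓝 p₀))
    {c : ι → ℝ} {c₀ : ℝ} (hc : Tendsto c l (𝓝 c₀)) {δ : ι → ℝ} (hδ : Tendsto δ l (𝓝 0))
    {ζ : ι → B} (hζK : ∀ j, ζ j ∈ K) (hcut : ∀ j, ∀ᶠ i in l, c i ≤ P (p i) (ζ j))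
    {z : B} (hζmin : ∀ j, P (p j) (ζ j) ≤ P (p j) z + δ j) :
    c₀ ≤ P p₀ z := by
  have hlim_cut (j : ι) : c₀ ≤ P p₀ (ζ j) :=
    le_of_tendsto_of_tendsto hc
      ((hP.tendsto (p₀, ζ j)).comp (hp.prodMk_nhds tendsto_const_nhds)) (hcut j)
  have herr := tendsto_dist_apply_of_isCompact hP hK hp hζK
  have hz : Tendsto (fun j => P (p j) z) l (𝓝 (P p₀ z)) :=
    (hP.tendsto (p₀, z)).comp (hp.prodMk_nhds tendsto_const_nhds)
  refine ge_of_tendsto (by simpa using (herr.add hz).add hδ) (Eventually.of_forall fun j => ?_)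
  calc c₀ ≤ P p₀ (ζ j) := hlim_cut j
    _ ≤ dist (P (p j) (ζ j)) (P p₀ (ζ j)) + P (p j) (ζ j) := by
      rw [dist_comm]
      linarith [Real.sub_le_dist (P p₀ (ζ j)) (P (p j) (ζ j))]
    _ ≤ _ := by linarith [hζmin j]

theorem eq_image_Icc_of_eq_union {β : Type*} {Z : ℕ → Set β} {z : ℕ → β} (h0 : Z 0 = ∅)
    (hsucc : ∀ k, Z (k + 1) = Z k ∪ {z (k + 1)}) (k : ℕ) : Z k = z '' Icc 1 k := by
  induction k with
  | zero => simp [h0]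
  | succ k ih =>
    rw [hsucc, ih, ← insert_Icc_right_eq_Icc_add_one (by omega), image_insert_eq, union_comm,
      singleton_union]

theorem EReal.le_of_tendsto_of_le_add_coe {ι : Type*} {l : Filter ι} [l.NeBot]
    {a : ι → EReal} {a₀ L : EReal} {ε : ι → ℝ} (ha : Tendsto a l (𝓝 a₀)) (hε : Tendsto ε l (𝓝 0))
    (hle : ∀ᶠ k in l, a k ≤ L + ε k) : a₀ ≤ L := by
  have h0 : Tendsto (fun k => ((ε k : ℝ) : EReal)) l (𝓝 0) := by
    simpa using EReal.tendsto_coe.2 hε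
  have hL := (EReal.continuousAt_add (p := (L, 0)) (Or.inr EReal.zero_ne_bot)
    (Or.inr EReal.zero_ne_top)).tendsto.comp (tendsto_const_nhds.prodMk_nhds h0)
  rw [add_zero] at hL
  exact le_of_tendsto_of_tendsto ha hL hle

section MasterProblem

variable {X : Set (Rn n)} {Y : Set (Rn m)} {D : Set Q} {fn : Rn n × Rn m → EReal}
  {gn : Rn n × Rn m → ℝ} {Hn : Rn n × Rn m → Q} {σn θn lamBar τn : ℝ}
  {x : Rn n} {y : Rn m} {u : Q} {α lam : ℝ}

theorem MVal_le_PnuObj {S : Set (Rn m)} (h : MFeas X Y D fn gn Hn lamBar τn S x y u α lam) :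
    MVal X Y D fn gn Hn σn θn lamBar τn S ≤ PnuObj fn σn θn x y u α :=
  iInf_le_of_le x <| iInf_le_of_le y <| iInf_le_of_le u <| iInf_le_of_le α <|
    iInf_le_of_le lam <| iInf_le _ h

theorem MVal_mono {S T : Set (Rn m)} (hST : S ⊆ T) :
    MVal X Y D fn gn Hn σn θn lamBar τn S ≤ MVal X Y D fn gn Hn σn θn lamBar τn T := by
  simp only [MVal, le_iInf_iff]
  exact fun x y u α lam h => MVal_le_PnuObj ⟨h.1, fun z hz => h.2 z (hST hz)⟩

theorem psiz_nonpos_iff {z : Rn m} :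
    psiz D gn Hn τn z x y α lam ≤ 0 ↔
      gn (x, y) + α - τn ≤ gn (x, z) + lam * infDist (Hn (x, z)) D := by
  rw [psiz]
  constructor <;> intro h <;> linarith

variable {ι : Type*} {l : Filter ι} {xs : ι → Rn n} {ys : ι → Rn m} {us : ι → Q}
  {αs lams : ι → ℝ}

theorem Cmem_of_tendsto [l.NeBot] (hX : IsClosed X) (hY : IsClosed Y) (hD : IsClosed D)
    (hH : Continuous Hn) (hdom : IsClosed {p : Rn n × Rn m | fn p ≠ ⊤})
    (hx : Tendsto xs l (𝓝 x)) (hy : Tendsto ys l (𝓝 y)) (hu : Tendsto us l (𝓝 u))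
    (hα : Tendsto αs l (𝓝 α)) (hlam : Tendsto lams l (𝓝 lam))
    (hC : ∀ᶠ k in l, Cmem X Y D fn Hn lamBar (xs k) (ys k) (us k) (αs k) (lams k)) :
    Cmem X Y D fn Hn lamBar x y u α lam := by
  have hxy := hx.prodMk_nhds hy
  exact ⟨hX.mem_of_tendsto hx (hC.mono fun _ h => h.1),
    hY.mem_of_tendsto hy (hC.mono fun _ h => h.2.1),
    le_of_tendsto hα (hC.mono fun _ h => h.2.2.1),
    ge_of_tendsto hlam (hC.mono fun _ h => h.2.2.2.1),
    le_of_tendsto hlam (hC.mono fun _ h => h.2.2.2.2.1),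
    hD.mem_of_tendsto (((hH.tendsto _).comp hxy).add hu) (hC.mono fun _ h => h.2.2.2.2.2.1),
    hdom.mem_of_tendsto hxy (hC.mono fun _ h => h.2.2.2.2.2.2)⟩

theorem tendsto_PnuObj (hf : ContinuousOn fn {p : Rn n × Rn m | fn p ≠ ⊤})
    (hx : Tendsto xs l (𝓝 x)) (hy : Tendsto ys l (𝓝 y)) (hu : Tendsto us l (𝓝 u))
    (hα : Tendsto αs l (𝓝 α)) (hdom : fn (x, y) ≠ ⊤)
    (hdoms : ∀ᶠ k in l, fn (xs k, ys k) ≠ ⊤) :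
    Tendsto (fun k => PnuObj fn σn θn (xs k) (ys k) (us k) (αs k)) l
      (𝓝 (PnuObj fn σn θn x y u α)) := by
  have hf' : Tendsto (fun k => fn (xs k, ys k)) l (𝓝 (fn (x, y))) :=
    (hf _ hdom).tendsto.comp (tendsto_nhdsWithin_iff.2 ⟨hx.prodMk_nhds hy, hdoms⟩)
  have hr : Tendsto (fun k => ((σn * ‖us k‖ - θn * αs k : ℝ) : EReal)) l
      (𝓝 ((σn * ‖u‖ - θn * α : ℝ) : EReal)) :=
    (continuous_coe_real_ereal.tendsto _).comp ((hu.norm.const_mul σn).sub (hα.const_mul θn))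
  exact (EReal.continuousAt_add (Or.inr (EReal.coe_ne_bot _))
    (Or.inr (EReal.coe_ne_top _))).tendsto.comp (hf'.prodMk_nhds hr)

end MasterProblem

theorem outer_approximation_algorithm_general
    (X : Set (Rn n)) (Y : Set (Rn m)) (D : Set Q) (Yn : Set (Rn m))
    (fn : Rn n × Rn m → EReal) (gn : Rn n × Rn m → ℝ) (Hn : Rn n × Rn m → Q)
    (σn θn lamBar τn : ℝ)
    (hXc : IsClosed X) (hYc : IsClosed Y) (hDc : IsClosed D)
    (hYncpt : IsCompact Yn)
    (hgcont : Continuous gn) (hHcont : Continuous Hn)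
    (hdomc : IsClosed {p : Rn n × Rn m | fn p ≠ ⊤})
    (hfcont : ContinuousOn fn {p : Rn n × Rn m | fn p ≠ ⊤})
    -- algorithm data and iterates
    (ε δ : ℕ → ℝ)
    (hεlim : Tendsto ε atTop (𝓝 0)) (hδlim : Tendsto δ atTop (𝓝 0))
    (xs : ℕ → Rn n) (ys : ℕ → Rn m) (us : ℕ → Q) (αs lams : ℕ → ℝ)
    (zs : ℕ → Rn m) (Yk : ℕ → Set (Rn m))
    (hY0 : Yk 0 = ∅)
    (hYstep : ∀ k : ℕ, Yk (k + 1) = Yk k ∪ {zs (k + 1)})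
    -- Step 1: z^{k+1} is a δ^{k+1}-minimizer of the penalized lower-level problem
    (hz : ∀ k : ℕ, zs (k + 1) ∈ Yn ∧ ∀ z ∈ Yn,
      gn (xs k, zs (k + 1)) + lams k * infDist (Hn (xs k, zs (k + 1))) D ≤
        gn (xs k, z) + lams k * infDist (Hn (xs k, z)) D + δ (k + 1))
    -- Step 2: w^{k+1} is an ε^{k+1}-minimizer of the master problem
    (hw : ∀ k : ℕ,
      MFeas X Y D fn gn Hn lamBar τn (Yk (k + 1))
        (xs (k + 1)) (ys (k + 1)) (us (k + 1)) (αs (k + 1)) (lams (k + 1)) ∧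
      PnuObj fn σn θn (xs (k + 1)) (ys (k + 1)) (us (k + 1)) (αs (k + 1)) ≠ ⊤ ∧
      PnuObj fn σn θn (xs (k + 1)) (ys (k + 1)) (us (k + 1)) (αs (k + 1)) ≤
        MVal X Y D fn gn Hn σn θn lamBar τn (Yk (k + 1)) + ((ε (k + 1) : ℝ) : EReal))
    -- convergence along a subsequence N
    (φ : ℕ → ℕ) (hφ : StrictMono φ)
    (hatx : Rn n) (haty : Rn m) (hatu : Q) (hatα hatlam : ℝ)
    (hcx : Tendsto (fun k => xs (φ k)) atTop (𝓝 hatx))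
    (hcy : Tendsto (fun k => ys (φ k)) atTop (𝓝 haty))
    (hcu : Tendsto (fun k => us (φ k)) atTop (𝓝 hatu))
    (hcα : Tendsto (fun k => αs (φ k)) atTop (𝓝 hatα))
    (hclam : Tendsto (fun k => lams (φ k)) atTop (𝓝 hatlam)) :
    (MFeas X Y D fn gn Hn lamBar τn Yn hatx haty hatu hatα hatlam ∧
      PnuObj fn σn θn hatx haty hatu hatα ≠ ⊤ ∧
      PnuObj fn σn θn hatx haty hatu hatα =
        MVal X Y D fn gn Hn σn θn lamBar τn Yn) ∧
    Tendsto (fun k => PnuObj fn σn θn (xs (φ k)) (ys (φ k)) (us (φ k)) (αs (φ k)))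
      atTop (𝓝 (MVal X Y D fn gn Hn σn θn lamBar τn Yn)) := by
  have hYk := eq_image_Icc_of_eq_union hY0 hYstep
  have hYkYn (k : ℕ) : Yk k ⊆ Yn := by
    rw [hYk, image_subset_iff]
    rintro (_ | i) ⟨hi, -⟩
    exacts [absurd hi (by omega), (hz i).1]
  have hstep : ∀ k, 1 ≤ k →
      MFeas X Y D fn gn Hn lamBar τn (Yk k) (xs k) (ys k) (us k) (αs k) (lams k) ∧
      PnuObj fn σn θn (xs k) (ys k) (us k) (αs k) ≤
        MVal X Y D fn gn Hn σn θn lamBar τn Yn + ((ε k : ℝ) : EReal) := by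
    rintro (_ | k) hk
    · omega
    · exact ⟨(hw k).1, (hw k).2.2.trans (add_le_add_left (MVal_mono (hYkYn _)) _)⟩
  have hφ1 : ∀ᶠ i in atTop, 1 ≤ φ i := hφ.tendsto_atTop.eventually_ge_atTop 1
  have hC : Cmem X Y D fn Hn lamBar hatx haty hatu hatα hatlam :=
    Cmem_of_tendsto hXc hYc hDc hHcont hdomc hcx hcy hcu hcα hclam
      (hφ1.mono fun i hi => (hstep _ hi).1.1)
  have hcut (j : ℕ) : ∀ᶠ i in atTop, gn (xs (φ i), ys (φ i)) + αs (φ i) - τn ≤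
      gn (xs (φ i), zs (φ j + 1)) + lams (φ i) * infDist (Hn (xs (φ i), zs (φ j + 1))) D := by
    filter_upwards [hφ.tendsto_atTop.eventually_ge_atTop (φ j + 1)] with i hi
    exact psiz_nonpos_iff.1 <| (hstep (φ i) (by omega)).1.2 (zs (φ j + 1))
      (hYk _ ▸ mem_image_of_mem _ ⟨by omega, hi⟩)
  have hcon (z : Rn m) (hzYn : z ∈ Yn) : psiz D gn Hn τn z hatx haty hatα hatlam ≤ 0 :=
    psiz_nonpos_iff.2 <| le_of_tendsto_of_approx_cuts
      (P := fun (p : Rn n × ℝ) z => gn (p.1, z) + p.2 * infDist (Hn (p.1, z)) D) (by fun_prop)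
      hYncpt (hcx.prodMk_nhds hclam)
      ((((hgcont.tendsto _).comp (hcx.prodMk_nhds hcy)).add hcα).sub_const τn)
      (hδlim.comp ((tendsto_add_atTop_nat 1).comp hφ.tendsto_atTop))
      (fun j => (hz _).1) hcut (fun j => (hz _).2 z hzYn)
  have hdom : fn (hatx, haty) ≠ ⊤ := hC.2.2.2.2.2.2
  have hobj := tendsto_PnuObj (σn := σn) (θn := θn) hfcont hcx hcy hcu hcα hdom
    (hφ1.mono fun i hi => (hstep _ hi).1.1.2.2.2.2.2.2)
  have heq := le_antisymm
    (EReal.le_of_tendsto_of_le_add_coe hobj (hεlim.comp hφ.tendsto_atTop)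
      (hφ1.mono fun i hi => (hstep _ hi).2))
    (MVal_le_PnuObj ⟨hC, hcon⟩)
  exact ⟨⟨⟨hC, hcon⟩, EReal.add_ne_top hdom (EReal.coe_ne_top _), heq⟩, heq ▸ hobj⟩

/-- Proposition 4.2: convergence of the outer approximation algorithm for (P)^ν. -/
theorem outer_approximation_algorithm
    [NormedSpace ℝ Q] [FiniteDimensional ℝ Q]
    (X : Set (Rn n)) (Y : Set (Rn m)) (D : Set Q) (Yn : Set (Rn m))
    (fn : Rn n × Rn m → EReal) (gn : Rn n × Rn m → ℝ) (Hn : Rn n × Rn m → Q)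
    (σn θn lamBar τn : ℝ)
    (hσ : 0 ≤ σn) (hθ : 0 ≤ θn) (hlamBar : 0 ≤ lamBar) (hτn : 0 ≤ τn)
    (hfn_bot : ∀ p, fn p ≠ ⊥)
    (hXne : X.Nonempty) (hXc : IsClosed X)
    (hYne : Y.Nonempty) (hYc : IsClosed Y)
    (hDne : D.Nonempty) (hDc : IsClosed D)
    (hYnne : Yn.Nonempty) (hYncpt : IsCompact Yn) (hYnY : Yn ⊆ Y)
    (hgcont : Continuous gn) (hHcont : Continuous Hn)
    (hdomc : IsClosed {p : Rn n × Rn m | fn p ≠ ⊤})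
    (hfcont : ContinuousOn fn {p : Rn n × Rn m | fn p ≠ ⊤})
    (hunif : ∀ xb ∈ X, ∀ ε : ℝ, 0 < ε → ∃ ρ : ℝ, 0 < ρ ∧
      ∀ z ∈ Yn, ∀ x ∈ X, dist x xb ≤ ρ →
        |gn (x, z) - gn (xb, z)| ≤ ε ∧ ‖Hn (x, z) - Hn (xb, z)‖ ≤ ε)
    -- algorithm data and iterates
    (ε δ : ℕ → ℝ) (hε0 : ∀ k, 0 ≤ ε k) (hδ0 : ∀ k, 0 ≤ δ k)
    (hεlim : Tendsto ε atTop (𝓝 0)) (hδlim : Tendsto δ atTop (𝓝 0))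
    (xs : ℕ → Rn n) (ys : ℕ → Rn m) (us : ℕ → Q) (αs lams : ℕ → ℝ)
    (zs : ℕ → Rn m) (Yk : ℕ → Set (Rn m))
    (hinit : Cmem X Y D fn Hn lamBar (xs 0) (ys 0) (us 0) (αs 0) (lams 0))
    (hY0 : Yk 0 = ∅)
    (hYstep : ∀ k : ℕ, Yk (k + 1) = Yk k ∪ {zs (k + 1)})
    -- Step 1: z^{k+1} is a δ^{k+1}-minimizer of the penalized lower-level problem
    (hz : ∀ k : ℕ, zs (k + 1) ∈ Yn ∧ ∀ z ∈ Yn,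
      gn (xs k, zs (k + 1)) + lams k * infDist (Hn (xs k, zs (k + 1))) D ≤
        gn (xs k, z) + lams k * infDist (Hn (xs k, z)) D + δ (k + 1))
    -- Step 2: w^{k+1} is an ε^{k+1}-minimizer of the master problem
    (hw : ∀ k : ℕ,
      MFeas X Y D fn gn Hn lamBar τn (Yk (k + 1))
        (xs (k + 1)) (ys (k + 1)) (us (k + 1)) (αs (k + 1)) (lams (k + 1)) ∧
      PnuObj fn σn θn (xs (k + 1)) (ys (k + 1)) (us (k + 1)) (αs (k + 1)) ≠ ⊤ ∧
      PnuObj fn σn θn (xs (k + 1)) (ys (k + 1)) (us (k + 1)) (αs (k + 1)) ≤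
        MVal X Y D fn gn Hn σn θn lamBar τn (Yk (k + 1)) + ((ε (k + 1) : ℝ) : EReal))
    -- convergence along a subsequence N
    (φ : ℕ → ℕ) (hφ : StrictMono φ)
    (hatx : Rn n) (haty : Rn m) (hatu : Q) (hatα hatlam : ℝ)
    (hcx : Tendsto (fun k => xs (φ k)) atTop (𝓝 hatx))
    (hcy : Tendsto (fun k => ys (φ k)) atTop (𝓝 haty))
    (hcu : Tendsto (fun k => us (φ k)) atTop (𝓝 hatu))
    (hcα : Tendsto (fun k => αs (φ k)) atTop (𝓝 hatα))
    (hclam : Tendsto (fun k => lams (φ k)) atTop (𝓝 hatlam)) :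
    (MFeas X Y D fn gn Hn lamBar τn Yn hatx haty hatu hatα hatlam ∧
      PnuObj fn σn θn hatx haty hatu hatα ≠ ⊤ ∧
      PnuObj fn σn θn hatx haty hatu hatα =
        MVal X Y D fn gn Hn σn θn lamBar τn Yn) ∧
    Tendsto (fun k => PnuObj fn σn θn (xs (φ k)) (ys (φ k)) (us (φ k)) (αs (φ k)))
      atTop (𝓝 (MVal X Y D fn gn Hn σn θn lamBar τn Yn)) :=
  outer_approximation_algorithm_general X Y D Yn fn gn Hn σn θn lamBar τn hXc hYc hDc hYncpt hgcont
    hHcont hdomc hfcont ε δ hεlim hδlim xs ys us αs lams zs Yk hY0 hYstep hz hw φ hφ hatx haty hatu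
    hatα hatlam hcx hcy hcu hcα hclam
end
end
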